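/- arXiv:1506.08431 — 4 statements merged into one kernel-verified Lean document; each statement's English description precedes it below -/
import Mathlib

section
/- Let f : [0,1] → X be a map to a metric space X such that for every n and every interval I of the form [(k−1)/M_n, k/M_n) with k ∈ {1,…,M_n}, the diameter of f(I) is at most K|I|, where K is a fixed constant and M_n → ∞. Then for every Lebesgue measurable set S ⊆ [0,1], the 1-dimensional Hausdorff measure of f(S) is at most K·|S|. In particular, f maps Lebesgue null sets to H¹-null sets (Luzin's condition N). -/
open Filter MeasureTheory
open scoped ENNReal Topology

set_option linter.unusedSectionVars false

namespace Stmt6Aux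

/-- The level-`n` grid interval containing `x`. -/
noncomputable def J (M : ℕ → ℕ) (n : ℕ) (x : ℝ) : Set ℝ :=
  Set.Ico ((⌊x * M n⌋ : ℝ) / M n) (((⌊x * M n⌋ : ℝ) + 1) / M n)

variable {M : ℕ → ℕ}

lemma mem_J_iff (hMpos : ∀ i, 0 < M i) {n : ℕ} {x y : ℝ} :
    y ∈ J M n x ↔ ⌊y * M n⌋ = ⌊x * M n⌋ := by
  have hMn : (0:ℝ) < M n := by exact_mod_cast hMpos n
  rw [J, Set.mem_Ico, div_le_iff₀ hMn, lt_div_iff₀ hMn, Int.floor_eq_iff]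

lemma mem_J_self (hMpos : ∀ i, 0 < M i) (n : ℕ) (x : ℝ) : x ∈ J M n x :=
  (mem_J_iff hMpos).2 rfl

lemma J_eq_of_mem (hMpos : ∀ i, 0 < M i) {n : ℕ} {x y : ℝ} (h : y ∈ J M n x) :
    J M n y = J M n x := by
  unfold J; rw [(mem_J_iff hMpos).1 h]

lemma J_subset_J (hMpos : ∀ i, 0 < M i) {n p : ℕ} (hdvd : M n ∣ M p) (x : ℝ) :
    J M p x ⊆ J M n x := by
  obtain ⟨q, hq⟩ := hdvd
  have hMn : (0:ℝ) < M n := by exact_mod_cast hMpos n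
  have hMp : (0:ℝ) < M p := by exact_mod_cast hMpos p
  have hq0 : 0 < q := by
    rcases Nat.eq_zero_or_pos q with h | h
    · exfalso; have := hMpos p; rw [hq, h, Nat.mul_zero] at this; exact absurd this (lt_irrefl 0)
    · exact h
  have hqR : (0:ℝ) < q := by exact_mod_cast hq0
  have hqMR : (M p : ℝ) = (M n : ℝ) * q := by exact_mod_cast hq
  apply Set.Ico_subset_Ico
  · rw [div_le_div_iff₀ hMn hMp]
    have h1 : (⌊x * M n⌋ * q : ℤ) ≤ ⌊x * M p⌋ := by
      apply Int.le_floor.2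
      push_cast
      calc (⌊x * (M n:ℝ)⌋ : ℝ) * q ≤ (x * M n) * q := by
            gcongr; exact Int.floor_le _
        _ = x * M p := by rw [hqMR]; ring
    calc (⌊x * (M n:ℝ)⌋ : ℝ) * M p = ((⌊x * (M n:ℝ)⌋ * q : ℤ) : ℝ) * M n := by
          rw [hqMR]; push_cast; ring
      _ ≤ (⌊x * (M p:ℝ)⌋ : ℝ) * M n := mul_le_mul_of_nonneg_right (by exact_mod_cast h1) hMn.le
  · rw [div_le_div_iff₀ hMp hMn]
    have h2 : ⌊x * M p⌋ + 1 ≤ (⌊x * M n⌋ + 1) * q := by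
      have : ⌊x * M p⌋ < (⌊x * M n⌋ + 1) * q := by
        apply Int.floor_lt.2
        push_cast
        calc x * (M p:ℝ) = (x * M n) * q := by rw [hqMR]; ring
          _ < ((⌊x * (M n:ℝ)⌋ : ℝ) + 1) * q := by
              gcongr; exact Int.lt_floor_add_one _
      omega
    calc ((⌊x * (M p:ℝ)⌋ : ℝ) + 1) * M n ≤ (((⌊x * M n⌋ + 1) * q : ℤ) : ℝ) * M n :=
          mul_le_mul_of_nonneg_right (by exact_mod_cast h2) hMn.le
      _ = ((⌊x * (M n:ℝ)⌋ : ℝ) + 1) * M p := by rw [hqMR]; push_cast; ring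

lemma J_subset_Ico (hMpos : ∀ i, 0 < M i) {n : ℕ} {x : ℝ} (hx : x ∈ Set.Ico (0:ℝ) 1) :
    J M n x ⊆ Set.Ico (0:ℝ) 1 := by
  have hMn : (0:ℝ) < M n := by exact_mod_cast hMpos n
  have h0 : (0:ℤ) ≤ ⌊x * M n⌋ := Int.floor_nonneg.2 (mul_nonneg hx.1 hMn.le)
  have h1 : ⌊x * M n⌋ + 1 ≤ (M n : ℤ) := by
    have : ⌊x * M n⌋ < (M n : ℤ) := Int.floor_lt.2 (by
      calc x * M n < 1 * M n := by gcongr; exact hx.2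
        _ = M n := one_mul _)
    omega
  apply Set.Ico_subset_Ico
  · exact div_nonneg (by exact_mod_cast h0) hMn.le
  · rw [div_le_one hMn]; exact_mod_cast h1


section
variable {X : Type*} [MetricSpace X] [MeasurableSpace X] [BorelSpace X]
  {f : ℝ → X} {K : ℝ}

lemma diam_image_J (hMpos : ∀ i, 0 < M i)
    (hdiam : ∀ n k : ℕ, 1 ≤ k → k ≤ M n →
      EMetric.diam (f '' Set.Ico (((k : ℝ) - 1) / M n) ((k : ℝ) / M n)) ≤
        ENNReal.ofReal (K * (1 / M n)))
    {n : ℕ} {x : ℝ} (hx : x ∈ Set.Ico (0:ℝ) 1) :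
    EMetric.diam (f '' J M n x) ≤ ENNReal.ofReal (K * (1 / M n)) := by
  have hMn : (0:ℝ) < M n := by exact_mod_cast hMpos n
  have h0 : (0:ℤ) ≤ ⌊x * M n⌋ := Int.floor_nonneg.2 (mul_nonneg hx.1 hMn.le)
  have h1 : ⌊x * M n⌋ < (M n : ℤ) := Int.floor_lt.2 (by
    calc x * M n < 1 * M n := by gcongr; exact hx.2
      _ = M n := one_mul _)
  set k : ℕ := ⌊x * M n⌋.toNat + 1 with hk
  have hA : ((⌊x * (M n:ℝ)⌋.toNat : ℝ)) = (⌊x * (M n:ℝ)⌋ : ℝ) := by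
    exact_mod_cast Int.toNat_of_nonneg h0
  have hcast : ((k:ℝ) - 1) = (⌊x * (M n:ℝ)⌋ : ℝ) := by
    rw [hk, Nat.cast_add, Nat.cast_one, hA]; ring
  have hcast2 : (k:ℝ) = (⌊x * (M n:ℝ)⌋ : ℝ) + 1 := by
    rw [hk, Nat.cast_add, Nat.cast_one, hA]
  have hJ : J M n x = Set.Ico (((k:ℝ) - 1) / M n) ((k:ℝ) / M n) := by
    unfold J; rw [hcast, hcast2]
  rw [hJ]
  exact hdiam n k (Nat.le_add_left 1 _) (by omega)

lemma hausdorff_image_J (hMpos : ∀ i, 0 < M i)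
    (hMdvd : ∀ n p : ℕ, n ≤ p → M n ∣ M p)
    (hMtop : Tendsto (fun n => (M n : ℝ)) atTop atTop)
    (hdiam : ∀ n k : ℕ, 1 ≤ k → k ≤ M n →
      EMetric.diam (f '' Set.Ico (((k : ℝ) - 1) / M n) ((k : ℝ) / M n)) ≤
        ENNReal.ofReal (K * (1 / M n)))
    {n₀ : ℕ} {x₀ : ℝ} (hx₀ : x₀ ∈ Set.Ico (0:ℝ) 1) :
    μH[1] (f '' J M n₀ x₀) ≤ ENNReal.ofReal (K / M n₀) := by
  classical
  set t : ℕ → ℕ → Set X := fun n j => f '' (J M n ((j:ℝ) / M n) ∩ J M n₀ x₀) with ht_def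
  set r : ℕ → ℝ≥0∞ := fun n => ENNReal.ofReal (K * (1 / M n)) with hr_def
  have hfloorj : ∀ (n j : ℕ), ⌊((j:ℝ) / M n) * M n⌋ = (j : ℤ) := by
    intro n j
    have hMn : (0:ℝ) < M n := by exact_mod_cast hMpos n
    rw [div_mul_cancel₀ _ hMn.ne']
    exact Int.floor_natCast j
  have hr : Tendsto r atTop (𝓝 0) := by
    have h1 : Tendsto (fun n => K * (1 / (M n : ℝ))) atTop (𝓝 (K * 0)) := by
      exact Tendsto.const_mul K (by have h' : Tendsto (fun n => ((M n : ℝ))⁻¹) atTop (𝓝 0) := hMtop.inv_tendsto_atTop; simpa [one_div] using h')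
    rw [mul_zero] at h1
    have h2 := ENNReal.tendsto_ofReal h1
    rw [ENNReal.ofReal_zero] at h2
    exact h2
  have ht : ∀ n j, EMetric.diam (t n j) ≤ r n := by
    intro n j
    have hMn : (0:ℝ) < M n := by exact_mod_cast hMpos n
    rcases lt_or_ge j (M n) with hj | hj
    · refine le_trans (EMetric.diam_mono (Set.image_mono Set.inter_subset_left)) ?_
      refine diam_image_J hMpos hdiam ⟨by positivity, ?_⟩
      rw [div_lt_one hMn]; exact_mod_cast hj
    · have : J M n ((j:ℝ) / M n) ∩ J M n₀ x₀ = ∅ := by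
        rw [Set.eq_empty_iff_forall_notMem]
        rintro y ⟨hy1, hy2⟩
        have hyIco : y ∈ Set.Ico (0:ℝ) 1 := J_subset_Ico hMpos hx₀ hy2
        have hyl : ((j:ℝ)) / M n ≤ y := by
          have := hy1.1
          rwa [hfloorj n j, Int.cast_natCast] at this
        have : (1:ℝ) ≤ (j:ℝ) / M n := by
          rw [le_div_iff₀ hMn, one_mul]; exact_mod_cast hj
        linarith [hyIco.2]
      simp [t, this]
      exact (le_of_eq Metric.ediam_empty).trans zero_le
  have hst : ∀ (n : ℕ), f '' J M n₀ x₀ ⊆ ⋃ j, t n j := by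
    intro n
    rintro _ ⟨z, hz, rfl⟩
    have hzIco : z ∈ Set.Ico (0:ℝ) 1 := J_subset_Ico hMpos hx₀ hz
    have hMn : (0:ℝ) < M n := by exact_mod_cast hMpos n
    have hz0 : (0:ℤ) ≤ ⌊z * M n⌋ := Int.floor_nonneg.2 (mul_nonneg hzIco.1 hMn.le)
    refine Set.mem_iUnion.2 ⟨⌊z * (M n:ℝ)⌋.toNat, ⟨z, ⟨?_, hz⟩, rfl⟩⟩
    rw [mem_J_iff hMpos, hfloorj]
    omega
  refine le_trans (MeasureTheory.Measure.hausdorffMeasure_le_liminf_tsum 1 (f '' J M n₀ x₀) r hr t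
    (Filter.Eventually.of_forall ht) (Filter.Eventually.of_forall hst)) ?_
  have hev : ∀ᶠ n in atTop, (∑' j, EMetric.diam (t n j) ^ (1:ℝ)) ≤ ENNReal.ofReal (K / M n₀) := by
    filter_upwards [Filter.eventually_ge_atTop n₀] with n hn
    obtain ⟨q, hq⟩ := hMdvd n₀ n hn
    have hMn : (0:ℝ) < M n := by exact_mod_cast hMpos n
    have hMn₀ : (0:ℝ) < M n₀ := by exact_mod_cast hMpos n₀
    have hq0 : 0 < q := by
      rcases Nat.eq_zero_or_pos q with h | h
      · exfalso; have := hMpos n; rw [hq, h, Nat.mul_zero] at this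
        exact absurd this (lt_irrefl 0)
      · exact h
    have hqMR : (M n : ℝ) = (M n₀ : ℝ) * q := by exact_mod_cast hq
    set a : ℤ := ⌊x₀ * M n₀⌋ with ha
    have ha0 : (0:ℤ) ≤ a := Int.floor_nonneg.2 (mul_nonneg hx₀.1 hMn₀.le)
    set F : Finset ℕ := Finset.Ico (a.toNat * q) (a.toNat * q + q) with hF
    have hzero : ∀ j ∉ F, t n j = ∅ := by
      intro j hj
      rw [Set.eq_empty_iff_forall_notMem]
      rintro _ ⟨z, ⟨hz1, hz2⟩, rfl⟩
      apply hj
      have hfl : ⌊z * (M n:ℝ)⌋ = (j:ℤ) := by rw [(mem_J_iff hMpos).1 hz1, hfloorj]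
      have hfl0 : ⌊z * (M n₀:ℝ)⌋ = a := (mem_J_iff hMpos).1 hz2
      have hl1 : (j:ℝ) ≤ z * M n := by
        have := Int.floor_le (z * (M n:ℝ)); rwa [hfl, Int.cast_natCast] at this
      have hl2 : z * M n < (j:ℝ) + 1 := by
        have := Int.lt_floor_add_one (z * (M n:ℝ)); rwa [hfl, Int.cast_natCast] at this
      have hl3 : (a:ℝ) ≤ z * M n₀ := by
        have := Int.floor_le (z * (M n₀:ℝ)); rwa [hfl0] at this
      have hl4 : z * M n₀ < (a:ℝ) + 1 := by
        have := Int.lt_floor_add_one (z * (M n₀:ℝ)); rwa [hfl0] at this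
      have hcastA : ((a.toNat : ℝ)) = (a : ℝ) := by exact_mod_cast Int.toNat_of_nonneg ha0
      have hb1 : ((a.toNat * q : ℕ) : ℝ) < (j:ℝ) + 1 := by
        push_cast
        calc (a.toNat:ℝ) * q = (a:ℝ) * q := by rw [hcastA]
          _ ≤ (z * M n₀) * q := by
              have hqR : (0:ℝ) ≤ q := by positivity
              exact mul_le_mul_of_nonneg_right hl3 hqR
          _ = z * M n := by rw [hqMR]; ring
          _ < (j:ℝ) + 1 := hl2
      have hb2 : (j:ℝ) < ((a.toNat * q + q : ℕ) : ℝ) := by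
        push_cast
        calc (j:ℝ) ≤ z * M n := hl1
          _ = (z * M n₀) * q := by rw [hqMR]; ring
          _ < ((a:ℝ) + 1) * q := by
              have hqR : (0:ℝ) < q := by exact_mod_cast hq0
              exact mul_lt_mul_of_pos_right hl4 hqR
          _ = (a.toNat:ℝ) * q + q := by rw [hcastA]; ring
      have hb1' : a.toNat * q ≤ j := by
        have : ((a.toNat * q : ℕ) : ℝ) < ((j + 1 : ℕ) : ℝ) := by push_cast; exact_mod_cast hb1
        have := Nat.cast_lt.1 this
        omega
      have hb2' : j < a.toNat * q + q := by exact_mod_cast hb2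
      exact Finset.mem_Ico.2 ⟨hb1', hb2'⟩
    calc (∑' j, EMetric.diam (t n j) ^ (1:ℝ))
        = ∑ j ∈ F, EMetric.diam (t n j) ^ (1:ℝ) := by
          refine tsum_eq_sum ?_
          intro j hj
          rw [hzero j hj]
          simp
          exact Metric.ediam_empty
      _ ≤ ∑ j ∈ F, ENNReal.ofReal (K * (1 / M n)) := by
          refine Finset.sum_le_sum fun j _ => ?_
          rw [ENNReal.rpow_one]; exact ht n j
      _ = (q : ℝ≥0∞) * ENNReal.ofReal (K * (1 / M n)) := by
          rw [Finset.sum_const, hF, Nat.card_Ico]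
          simp [nsmul_eq_mul]
      _ = ENNReal.ofReal (K / M n₀) := by
          rw [← ENNReal.ofReal_natCast q, ← ENNReal.ofReal_mul (Nat.cast_nonneg q)]
          congr 1
          rw [hqMR]
          field_simp
  calc liminf (fun n => ∑' j, EMetric.diam (t n j) ^ (1:ℝ)) atTop
      ≤ liminf (fun _ => ENNReal.ofReal (K / M n₀)) atTop := Filter.liminf_le_liminf hev
    _ = ENNReal.ofReal (K / M n₀) := Filter.liminf_const _

end

end Stmt6Aux

/-- If `f : [0,1] → X` satisfies `diam f(I) ≤ K|I|` on every interval
`I = [(k-1)/Mₙ, k/Mₙ)` with `Mₙ → ∞`, then `H¹(f(S)) ≤ K·|S|` for every Lebesgue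
measurable `S ⊆ [0,1]`; in particular `f` satisfies Luzin's condition (N). -/
theorem stmt6 {X : Type*} [MetricSpace X] [MeasurableSpace X] [BorelSpace X]
    (f : ℝ → X) (K : ℝ) (hK : 0 ≤ K)
    (m : ℕ → ℕ) (hm : ∀ k, 2 ≤ m k)
    (M : ℕ → ℕ) (hM : ∀ i, M i = ∏ k ∈ Finset.Icc 1 i, m k)
    (hMtop : Tendsto (fun n => (M n : ℝ)) atTop atTop)
    (hdiam : ∀ n k : ℕ, 1 ≤ k → k ≤ M n →
      EMetric.diam (f '' Set.Ico (((k : ℝ) - 1) / M n) ((k : ℝ) / M n)) ≤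
        ENNReal.ofReal (K * (1 / M n))) :
    (∀ S : Set ℝ, S ⊆ Set.Icc 0 1 → MeasurableSet S →
      μH[1] (f '' S) ≤ ENNReal.ofReal K * volume S) ∧
    (∀ N : Set ℝ, N ⊆ Set.Icc 0 1 → volume N = 0 → μH[1] (f '' N) = 0) := by
  classical
  have hMpos : ∀ i, 0 < M i := fun i => by
    rw [hM]; exact Finset.prod_pos fun k _ => lt_of_lt_of_le two_pos (hm k)
  have hMdvd : ∀ n p : ℕ, n ≤ p → M n ∣ M p := fun n p hnp => by
    rw [hM, hM]
    exact Finset.prod_dvd_prod_of_subset _ _ m (Finset.Icc_subset_Icc_right hnp)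
  haveI : NoAtoms (μH[1] : Measure X) :=
    MeasureTheory.Measure.noAtoms_hausdorff X one_pos
  have key : ∀ S : Set ℝ, S ⊆ Set.Icc 0 1 →
      μH[1] (f '' S) ≤ ENNReal.ofReal K * volume S := by
    intro S hS
    have hU : ∀ U : Set ℝ, IsOpen U → S ⊆ U →
        μH[1] (f '' S) ≤ ENNReal.ofReal K * volume U := by
      intro U hUo hSU
      have hex : ∀ x, x ∈ U ∩ Set.Ico (0:ℝ) 1 → ∃ n, Stmt6Aux.J M n x ⊆ U := by
        intro x hx
        obtain ⟨δ, hδ, hball⟩ := Metric.isOpen_iff.1 hUo x hx.1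
        obtain ⟨n, hn⟩ := (hMtop.eventually_ge_atTop (2/δ)).exists
        have hMn : (0:ℝ) < M n := by exact_mod_cast hMpos n
        refine ⟨n, fun y hy => hball ?_⟩
        have hxJ := Stmt6Aux.mem_J_self (M := M) hMpos n x
        rw [Stmt6Aux.J, Set.mem_Ico] at hy hxJ
        have hsub : ((⌊x * (M n:ℝ)⌋ : ℝ) + 1) / M n - (⌊x * (M n:ℝ)⌋ : ℝ) / M n
            = 1 / M n := by field_simp; ring
        have hlen : (1:ℝ) / M n < δ := by
          rw [div_lt_iff₀ hMn]
          have h2 : 2 / δ * δ = 2 := by field_simp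
          nlinarith [hn, hδ]
        rw [Metric.mem_ball, Real.dist_eq, abs_sub_lt_iff]
        constructor <;> nlinarith [hy.1, hy.2, hxJ.1, hxJ.2]
      set ν : ℝ → ℕ := fun x =>
        if hx : x ∈ U ∩ Set.Ico (0:ℝ) 1 then Nat.find (hex x hx) else 0 with hν
      have hνspec : ∀ x, ∀ hx : x ∈ U ∩ Set.Ico (0:ℝ) 1,
          Stmt6Aux.J M (ν x) x ⊆ U := by
        intro x hx; rw [hν]; simp only [dif_pos hx]; exact Nat.find_spec (hex x hx)
      have hνmin : ∀ x, ∀ _ : x ∈ U ∩ Set.Ico (0:ℝ) 1, ∀ n,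
          Stmt6Aux.J M n x ⊆ U → ν x ≤ n := by
        intro x hx n h; rw [hν]; simp only [dif_pos hx]; exact Nat.find_min' (hex x hx) h
      set Iv : ℕ × ℤ → Set ℝ := fun p =>
        Set.Ico ((p.2:ℝ)/M p.1) (((p.2:ℝ)+1)/M p.1) with hIv
      set idx : ℝ → ℕ × ℤ := fun x => (ν x, ⌊x * M (ν x)⌋) with hidx
      have hIvJ : ∀ x, Iv (idx x) = Stmt6Aux.J M (ν x) x := fun x => rfl
      set T : Set (ℕ × ℤ) := {p | ∃ x, x ∈ U ∩ Set.Ico (0:ℝ) 1 ∧ p = idx x} with hT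
      have hkey2 : ∀ x y, x ∈ U ∩ Set.Ico (0:ℝ) 1 → y ∈ U ∩ Set.Ico (0:ℝ) 1 →
          ν x ≤ ν y → (Stmt6Aux.J M (ν x) x ∩ Stmt6Aux.J M (ν y) y).Nonempty →
          idx x = idx y := by
        rintro x y hx hy hle ⟨z, hz1, hz2⟩
        have h1 : Stmt6Aux.J M (ν y) z = Stmt6Aux.J M (ν y) y :=
          Stmt6Aux.J_eq_of_mem hMpos hz2
        have h2 : Stmt6Aux.J M (ν x) z = Stmt6Aux.J M (ν x) x :=
          Stmt6Aux.J_eq_of_mem hMpos hz1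
        have hyx : y ∈ Stmt6Aux.J M (ν x) x := by
          rw [← h2]
          exact Stmt6Aux.J_subset_J hMpos (hMdvd _ _ hle) z
            (by rw [h1]; exact Stmt6Aux.mem_J_self hMpos _ y)
        have h3 : Stmt6Aux.J M (ν x) y = Stmt6Aux.J M (ν x) x :=
          Stmt6Aux.J_eq_of_mem hMpos hyx
        have h4 : ν y ≤ ν x := hνmin y hy _ (by rw [h3]; exact hνspec x hx)
        have h5 : ν x = ν y := le_antisymm hle h4
        have h6 : ⌊y * (M (ν x) : ℝ)⌋ = ⌊x * (M (ν x) : ℝ)⌋ :=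
          (Stmt6Aux.mem_J_iff hMpos).1 hyx
        rw [hidx]
        simp only [← h5, h6]
      have hdisj : T.PairwiseDisjoint Iv := by
        rintro p ⟨x, hx, rfl⟩ p' ⟨y, hy, rfl⟩ hne
        by_contra h
        rw [Function.onFun, Set.not_disjoint_iff_nonempty_inter] at h
        rw [hIvJ x, hIvJ y] at h
        rcases le_total (ν x) (ν y) with hle | hle
        · exact hne (hkey2 x y hx hy hle h)
        · exact hne (hkey2 y x hy hx hle ⟨h.some, h.some_mem.2, h.some_mem.1⟩).symm
      have hTc : T.Countable := T.to_countable
      have hUnion : (⋃ p ∈ T, Iv p) ⊆ U := by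
        rintro z hz
        rw [Set.mem_iUnion₂] at hz
        obtain ⟨p, ⟨x, hx, rfl⟩, hzp⟩ := hz
        rw [hIvJ x] at hzp
        exact hνspec x hx hzp
      have hcover : f '' S ⊆ (⋃ p ∈ T, f '' Iv p) ∪ {f 1} := by
        rintro _ ⟨x, hxS, rfl⟩
        rcases eq_or_ne x 1 with rfl | hx1
        · exact Or.inr rfl
        · left
          have hxI : x ∈ Set.Ico (0:ℝ) 1 := ⟨(hS hxS).1, lt_of_le_of_ne (hS hxS).2 hx1⟩
          have hx : x ∈ U ∩ Set.Ico (0:ℝ) 1 := ⟨hSU hxS, hxI⟩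
          refine Set.mem_biUnion ⟨x, hx, rfl⟩ ?_
          rw [hIvJ x]
          exact ⟨x, Stmt6Aux.mem_J_self hMpos _ x, rfl⟩
      have hvol : ∀ x, x ∈ U ∩ Set.Ico (0:ℝ) 1 →
          volume (Iv (idx x)) = ENNReal.ofReal (1 / M (ν x)) := by
        intro x hx
        rw [hIvJ x, Stmt6Aux.J, Real.volume_Ico]
        congr 1
        rw [div_sub_div_same, add_sub_cancel_left]
      calc μH[1] (f '' S) ≤ μH[1] ((⋃ p ∈ T, f '' Iv p) ∪ {f 1}) := measure_mono hcover
        _ ≤ μH[1] (⋃ p ∈ T, f '' Iv p) + μH[1] ({f 1} : Set X) := measure_union_le _ _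
        _ = μH[1] (⋃ p ∈ T, f '' Iv p) := by haveI : NullSingletonClass (μH[1] : Measure X) := this; rw [measure_singleton, add_zero]
        _ ≤ ∑' p : T, μH[1] (f '' Iv p) := measure_biUnion_le _ hTc _
        _ ≤ ∑' p : T, ENNReal.ofReal K * volume (Iv p) := by
            refine ENNReal.tsum_le_tsum fun p => ?_
            obtain ⟨x, hx, hpx⟩ := p.2
            rw [hpx, hvol x hx, hIvJ x, ← ENNReal.ofReal_mul hK, mul_one_div]
            exact Stmt6Aux.hausdorff_image_J hMpos hMdvd hMtop hdiam hx.2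
        _ = ENNReal.ofReal K * ∑' p : T, volume (Iv p) := ENNReal.tsum_mul_left
        _ = ENNReal.ofReal K * volume (⋃ p ∈ T, Iv p) := by
            rw [measure_biUnion hTc hdisj fun p _ => measurableSet_Ico]
        _ ≤ ENNReal.ofReal K * volume U := mul_le_mul_right (measure_mono hUnion) _
    -- outer regularity
    have hSvol : volume S ≠ ∞ := by
      refine ne_of_lt (lt_of_le_of_lt (measure_mono hS) ?_)
      rw [Real.volume_Icc]
      exact ENNReal.ofReal_lt_top
    refine ENNReal.le_of_forall_pos_le_add fun ε hε hlt => ?_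
    set c := ENNReal.ofReal K with hc
    have hct : c ≠ ∞ := ENNReal.ofReal_ne_top
    have hc1 : c + 1 ≠ 0 := by intro h; rw [add_eq_zero] at h; exact one_ne_zero h.2
    have hc1t : c + 1 ≠ ∞ := by simp [hct]
    have hε' : (ε : ℝ≥0∞) / (c + 1) ≠ 0 := by
      simp [ENNReal.div_eq_zero_iff, hc1t, hε.ne']
    obtain ⟨U, hSU, hUo, hUvol⟩ := Set.exists_isOpen_lt_add S (μ := volume) hSvol hε'
    calc μH[1] (f '' S) ≤ c * volume U := hU U hUo hSU
      _ ≤ c * (volume S + (ε : ℝ≥0∞) / (c + 1)) := mul_le_mul_right hUvol.le _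
      _ = c * volume S + c * ((ε : ℝ≥0∞) / (c + 1)) := mul_add _ _ _
      _ ≤ c * volume S + ε := by
          gcongr
          calc c * ((ε : ℝ≥0∞) / (c + 1)) ≤ (c + 1) * ((ε : ℝ≥0∞) / (c + 1)) := by
                gcongr; exact le_self_add
            _ = ε := ENNReal.mul_div_cancel' (fun h => absurd h hc1) (fun h => absurd h hc1t)
  refine ⟨fun S hS _ => key S hS, fun N hN hN0 => ?_⟩
  have h := key N hN
  rw [hN0, mul_zero] at h
  exact le_antisymm h zero_le
end

section
/- Let (α_n) be a sequence of nonnegative reals with ∑ α_n = ∞ and α_n ≤ 1/2 for all n, let (m_n) be natural numbers with α_n m_n ∈ ℕ for every n, and set M_n = ∏_{k=1}^n m_k. Then for Lebesgue-almost every t ∈ [0,1], there exist arbitrarily large n such that dist(t, M_n⁻¹ ℕ) ≤ M_n⁻¹ α_n. -/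
open Filter MeasureTheory Set
open scoped ENNReal NNReal

namespace BC7aux


lemma sum_two_pow (k : ℕ) : ∑ i ∈ Finset.range k, 2 ^ i + 1 = 2 ^ k := by
  induction k with
  | zero => simp
  | succ k ih =>
      rw [Finset.sum_range_succ, pow_succ]
      omega

lemma geom_M (m M : ℕ → ℕ) (hm : ∀ n, 1 ≤ m n)
    (hM : ∀ i, M i = ∏ k ∈ Finset.Icc 1 i, m k) (n : ℕ) :
    ∑ j ∈ (Finset.range n).filter (fun j => 2 ≤ m j), M j ≤ 2 * M n := by
  classical
  set p : ℕ → Prop := fun k => 2 ≤ m k with hp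
  set c : ℕ → ℕ := fun j => ((Finset.Ioc 0 j).filter p).card with hc
  have hMIoc : ∀ i, M i = ∏ k ∈ Finset.Ioc 0 i, m k := by
    intro i; rw [hM i]; congr 1
  have hcmono : ∀ {i j : ℕ}, i ≤ j → c i ≤ c j := by
    intro i j hij
    exact Finset.card_le_card (Finset.filter_subset_filter _
      (Finset.Ioc_subset_Ioc le_rfl hij))
  have hkey : ∀ j, j < n → M j * 2 ^ (c n) ≤ M n * 2 ^ (c j) := by
    intro j hj
    have h1 : M n = M j * ∏ k ∈ Finset.Ioc j n, m k := by
      rw [hMIoc, hMIoc, Finset.prod_Ioc_consecutive _ (Nat.zero_le j) hj.le]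
    have h2 : c n = c j + ((Finset.Ioc j n).filter p).card := by
      have hu : Finset.Ioc 0 n = Finset.Ioc 0 j ∪ Finset.Ioc j n :=
        (Finset.Ioc_union_Ioc_eq_Ioc (Nat.zero_le j) hj.le).symm
      rw [hc]
      simp only
      rw [hu, Finset.filter_union, Finset.card_union_of_disjoint]
      exact Finset.disjoint_filter_filter (by
          simp only [Finset.disjoint_left, Finset.mem_Ioc]
          intro a ha hb; omega)
    have h3 : 2 ^ (((Finset.Ioc j n).filter p).card) ≤ ∏ k ∈ Finset.Ioc j n, m k := by
      calc 2 ^ (((Finset.Ioc j n).filter p).card)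
          ≤ ∏ k ∈ (Finset.Ioc j n).filter p, m k := by
            apply Finset.pow_card_le_prod
            intro a ha
            exact (Finset.mem_filter.mp ha).2
        _ ≤ ∏ k ∈ Finset.Ioc j n, m k := by
            apply Finset.prod_le_prod_of_subset_of_one_le' (Finset.filter_subset _ _)
            intro i _ _; exact hm i
    calc M j * 2 ^ (c n) = (M j * 2 ^ (((Finset.Ioc j n).filter p).card)) * 2 ^ (c j) := by
          rw [h2]; ring
      _ ≤ (M j * ∏ k ∈ Finset.Ioc j n, m k) * 2 ^ (c j) :=
          Nat.mul_le_mul_right _ (Nat.mul_le_mul_left _ h3)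
      _ = M n * 2 ^ (c j) := by rw [← h1]
  set F := (Finset.range n).filter (fun j => 2 ≤ m j) with hF
  have hinj : ∀ x ∈ F, ∀ y ∈ F, c x = c y → x = y := by
    intro x hx y hy hxy
    rcases lt_trichotomy x y with h | h | h
    · exfalso
      have hy' : y ∈ (Finset.Ioc 0 y).filter p := by
        simp only [Finset.mem_filter, Finset.mem_Ioc]
        exact ⟨⟨by omega, le_rfl⟩, (Finset.mem_filter.mp hy).2⟩
      have hsub : insert y ((Finset.Ioc 0 x).filter p) ⊆ (Finset.Ioc 0 y).filter p := by
        intro z hz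
        rcases Finset.mem_insert.mp hz with rfl | hz'
        · exact hy'
        · apply Finset.filter_subset_filter _ (Finset.Ioc_subset_Ioc le_rfl h.le) hz'
      have hnm : y ∉ (Finset.Ioc 0 x).filter p := by
        simp only [Finset.mem_filter, Finset.mem_Ioc]
        intro ⟨⟨_, h2⟩, _⟩; omega
      have hcard := Finset.card_le_card hsub
      rw [Finset.card_insert_of_notMem hnm] at hcard
      have hxy' : c x < c y := hcard
      omega
    · exact h
    · exfalso
      have hx' : x ∈ (Finset.Ioc 0 x).filter p := by
        simp only [Finset.mem_filter, Finset.mem_Ioc]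
        exact ⟨⟨by omega, le_rfl⟩, (Finset.mem_filter.mp hx).2⟩
      have hsub : insert x ((Finset.Ioc 0 y).filter p) ⊆ (Finset.Ioc 0 x).filter p := by
        intro z hz
        rcases Finset.mem_insert.mp hz with rfl | hz'
        · exact hx'
        · apply Finset.filter_subset_filter _ (Finset.Ioc_subset_Ioc le_rfl h.le) hz'
      have hnm : x ∉ (Finset.Ioc 0 y).filter p := by
        simp only [Finset.mem_filter, Finset.mem_Ioc]
        intro ⟨⟨_, h2⟩, _⟩; omega
      have hcard := Finset.card_le_card hsub
      rw [Finset.card_insert_of_notMem hnm] at hcard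
      have hxy' : c y < c x := hcard
      omega
  have hsum2 : ∑ j ∈ F, 2 ^ (c j) ≤ 2 * 2 ^ (c n) := by
    have h1 : ∑ j ∈ F, 2 ^ (c j) = ∑ i ∈ F.image c, 2 ^ i := by
      rw [Finset.sum_image hinj]
    have h2 : F.image c ⊆ Finset.range (c n + 1) := by
      intro i hi
      rcases Finset.mem_image.mp hi with ⟨j, hj, rfl⟩
      have : j < n := Finset.mem_range.mp (Finset.mem_filter.mp hj).1
      exact Finset.mem_range.mpr (Nat.lt_succ_of_le (hcmono this.le))
    calc ∑ j ∈ F, 2 ^ (c j) = ∑ i ∈ F.image c, 2 ^ i := h1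
      _ ≤ ∑ i ∈ Finset.range (c n + 1), 2 ^ i := Finset.sum_le_sum_of_subset h2
      _ ≤ 2 * 2 ^ (c n) := by
          have := sum_two_pow (c n + 1)
          rw [pow_succ] at this
          omega
  have hmain : (∑ j ∈ F, M j) * 2 ^ (c n) ≤ (2 * M n) * 2 ^ (c n) := by
    calc (∑ j ∈ F, M j) * 2 ^ (c n) = ∑ j ∈ F, M j * 2 ^ (c n) := Finset.sum_mul _ _ _
      _ ≤ ∑ j ∈ F, M n * 2 ^ (c j) := by
          apply Finset.sum_le_sum
          intro j hj
          exact hkey j (Finset.mem_range.mp (Finset.mem_filter.mp hj).1)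
      _ = M n * ∑ j ∈ F, 2 ^ (c j) := (Finset.mul_sum _ _ _).symm
      _ ≤ M n * (2 * 2 ^ (c n)) := Nat.mul_le_mul_left _ hsum2
      _ = (2 * M n) * 2 ^ (c n) := by ring
  exact Nat.le_of_mul_le_mul_right hmain (Nat.pow_pos (by norm_num))



/-- exact measure of the union of the little intervals -/
lemma vol_D (Mn : ℕ) (hMn : 0 < Mn) (a : ℝ) (ha0 : 0 ≤ a) (ha1 : a < 1) :
    volume (⋃ k ∈ Finset.range Mn, Icc ((k : ℝ) / Mn) (((k : ℝ) + a) / Mn))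
      = ENNReal.ofReal a := by
  have hMr : (0:ℝ) < (Mn:ℝ) := Nat.cast_pos.mpr hMn
  have hdisj : (↑(Finset.range Mn) : Set ℕ).PairwiseDisjoint
      (fun k : ℕ => Icc ((k : ℝ) / Mn) (((k : ℝ) + a) / Mn)) := by
    have key : ∀ x y : ℕ, x < y →
        Disjoint (Icc ((x : ℝ) / Mn) (((x : ℝ) + a) / Mn))
          (Icc ((y : ℝ) / Mn) (((y : ℝ) + a) / Mn)) := by
      intro x y hxy
      rw [Set.disjoint_left]
      rintro t ⟨_, ht2⟩ ⟨ht3, _⟩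
      have hxa : ((x:ℝ) + a) / Mn < (y:ℝ) / Mn := by
        apply (div_lt_div_iff_of_pos_right hMr).mpr
        have : (x:ℝ) + 1 ≤ (y:ℝ) := by exact_mod_cast hxy
        linarith
      linarith
    intro x _ y _ hxy
    rcases hxy.lt_or_gt with h | h
    · exact key x y h
    · exact (key y x h).symm
  rw [measure_biUnion_finset hdisj (fun k _ => measurableSet_Icc)]
  have hval : ∀ k : ℕ, volume (Icc ((k : ℝ) / Mn) (((k : ℝ) + a) / Mn))
      = ENNReal.ofReal (a / Mn) := by
    intro k
    rw [Real.volume_Icc]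
    congr 1
    field_simp
    ring
  simp only [hval, Finset.sum_const, Finset.card_range, nsmul_eq_mul]
  rw [← ENNReal.ofReal_natCast Mn, ← ENNReal.ofReal_mul (by positivity)]
  congr 1
  field_simp

/-- covering bound: the measure of `D n` inside an interval `[u,v]` -/
lemma vol_D_inter_Icc (Mn : ℕ) (hMn : 0 < Mn) (a : ℝ) (ha0 : 0 ≤ a) (ha1 : a ≤ 1)
    (u v : ℝ) (huv : u ≤ v) :
    volume ((⋃ k ∈ Finset.range Mn, Icc ((k : ℝ) / Mn) (((k : ℝ) + a) / Mn)) ∩ Icc u v)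
      ≤ ENNReal.ofReal (a * (v - u) + 2 * a / Mn) := by
  classical
  have hMr : (0:ℝ) < (Mn:ℝ) := Nat.cast_pos.mpr hMn
  have haM : a / Mn ≤ 1 / Mn := by
    apply (div_le_div_iff_of_pos_right hMr).mpr ha1
  set F := (Finset.range Mn).filter
    (fun k : ℕ => (k:ℝ)/Mn ≤ v ∧ u - a/Mn ≤ (k:ℝ)/Mn) with hF
  have hsub : (⋃ k ∈ Finset.range Mn, Icc ((k : ℝ) / Mn) (((k : ℝ) + a) / Mn)) ∩ Icc u v
      ⊆ ⋃ k ∈ F, Icc ((k : ℝ) / Mn) (((k : ℝ) + a) / Mn) := by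
    rintro t ⟨ht1, ht2⟩
    simp only [Set.mem_iUnion, Finset.mem_range, exists_prop] at ht1
    obtain ⟨k, hk, hkt⟩ := ht1
    have h1 : (k:ℝ)/Mn ≤ v := le_trans hkt.1 ht2.2
    have h2 : u - a/Mn ≤ (k:ℝ)/Mn := by
      have h3 : t ≤ (k:ℝ)/Mn + a/Mn := by
        have h4 := hkt.2
        rw [add_div] at h4
        exact h4
      have h5 := ht2.1
      linarith
    refine Set.mem_biUnion ?_ hkt
    rw [hF]
    exact Finset.mem_filter.mpr ⟨Finset.mem_range.mpr hk, h1, h2⟩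
  have hcard : (F.card : ℝ) * (1/Mn) ≤ (v - u) + 2/Mn := by
    have hdisj : (↑F : Set ℕ).PairwiseDisjoint
        (fun k : ℕ => Ico ((k : ℝ) / Mn) (((k : ℝ) + 1) / Mn)) := by
      have key : ∀ x y : ℕ, x < y →
          Disjoint (Ico ((x : ℝ) / Mn) (((x : ℝ) + 1) / Mn))
            (Ico ((y : ℝ) / Mn) (((y : ℝ) + 1) / Mn)) := by
        intro x y hxy
        rw [Set.disjoint_left]
        rintro t ⟨_, ht2⟩ ⟨ht3, _⟩
        have hxa : ((x:ℝ) + 1) / Mn ≤ (y:ℝ) / Mn := by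
          apply (div_le_div_iff_of_pos_right hMr).mpr
          exact_mod_cast hxy
        linarith
      intro x _ y _ hxy
      rcases hxy.lt_or_gt with h | h
      · exact key x y h
      · exact (key y x h).symm
    have hvol : volume (⋃ k ∈ F, Ico ((k : ℝ) / Mn) (((k : ℝ) + 1) / Mn))
        = (F.card : ℝ≥0∞) * ENNReal.ofReal (1/Mn) := by
      rw [measure_biUnion_finset hdisj (fun k _ => measurableSet_Ico)]
      have hval : ∀ k : ℕ, volume (Ico ((k : ℝ) / Mn) (((k : ℝ) + 1) / Mn))
          = ENNReal.ofReal (1 / Mn) := by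
        intro k
        rw [Real.volume_Ico]
        congr 1
        field_simp
        ring
      simp only [hval, Finset.sum_const, nsmul_eq_mul]
    have hsub2 : (⋃ k ∈ F, Ico ((k : ℝ) / Mn) (((k : ℝ) + 1) / Mn))
        ⊆ Icc (u - 1/Mn) (v + 1/Mn) := by
      intro t ht
      simp only [Set.mem_iUnion, exists_prop] at ht
      obtain ⟨k, hk, hkt⟩ := ht
      rw [hF] at hk
      simp only [Finset.mem_filter, Finset.mem_range] at hk
      constructor
      · have h6 := hk.2.2
        have h7 := hkt.1
        linarith
      · have h6 := hk.2.1
        have h7 := hkt.2.le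
        rw [add_div] at h7
        linarith
    have hvle : volume (⋃ k ∈ F, Ico ((k : ℝ) / Mn) (((k : ℝ) + 1) / Mn))
        ≤ volume (Icc (u - 1/Mn) (v + 1/Mn)) := measure_mono hsub2
    rw [hvol, Real.volume_Icc] at hvle
    have hcast : (F.card : ℝ≥0∞) * ENNReal.ofReal (1/Mn)
        = ENNReal.ofReal ((F.card : ℝ) * (1/Mn)) := by
      rw [ENNReal.ofReal_mul (by positivity), ENNReal.ofReal_natCast]
    rw [hcast] at hvle
    have h1M : (0:ℝ) < 1/Mn := by positivity
    have h8 := (ENNReal.ofReal_le_ofReal_iff (by linarith)).mp hvle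
    have h2M : 2/(Mn:ℝ) = 1/Mn + 1/Mn := by ring
    rw [h2M]
    linarith
  calc volume ((⋃ k ∈ Finset.range Mn, Icc ((k : ℝ) / Mn) (((k : ℝ) + a) / Mn)) ∩ Icc u v)
      ≤ volume (⋃ k ∈ F, Icc ((k : ℝ) / Mn) (((k : ℝ) + a) / Mn)) := measure_mono hsub
    _ ≤ ∑ k ∈ F, volume (Icc ((k : ℝ) / Mn) (((k : ℝ) + a) / Mn)) :=
        measure_biUnion_finset_le _ _
    _ = (F.card : ℝ≥0∞) * ENNReal.ofReal (a/Mn) := by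
        have hval : ∀ k : ℕ, volume (Icc ((k : ℝ) / Mn) (((k : ℝ) + a) / Mn))
            = ENNReal.ofReal (a / Mn) := by
          intro k
          rw [Real.volume_Icc]
          congr 1
          field_simp
          ring
        simp only [hval, Finset.sum_const, nsmul_eq_mul]
    _ = ENNReal.ofReal ((F.card : ℝ) * (a/Mn)) := by
        rw [ENNReal.ofReal_mul (by positivity), ENNReal.ofReal_natCast]
    _ ≤ ENNReal.ofReal (a * (v - u) + 2 * a / Mn) := by
        apply ENNReal.ofReal_le_ofReal
        have h9 : (F.card : ℝ) * (a/Mn) = ((F.card : ℝ) * (1/Mn)) * a := by ring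
        rw [h9]
        have h10 := mul_le_mul_of_nonneg_right hcard ha0
        calc ((F.card : ℝ) * (1/Mn)) * a ≤ ((v - u) + 2/Mn) * a := h10
          _ = a * (v - u) + 2 * a / Mn := by ring

lemma vol_cross (Mi Mn : ℕ) (hMi : 0 < Mi) (hMn : 0 < Mn)
    (ai an : ℝ) (hai0 : 0 ≤ ai) (hai1 : ai ≤ 1) (han0 : 0 ≤ an) (han1 : an ≤ 1) :
    volume ((⋃ k ∈ Finset.range Mi, Icc ((k : ℝ) / Mi) (((k : ℝ) + ai) / Mi))
        ∩ (⋃ k ∈ Finset.range Mn, Icc ((k : ℝ) / Mn) (((k : ℝ) + an) / Mn)))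
      ≤ ENNReal.ofReal (ai * an + 2 * an * Mi / Mn) := by
  have hMir : (0:ℝ) < (Mi:ℝ) := Nat.cast_pos.mpr hMi
  have hMnr : (0:ℝ) < (Mn:ℝ) := Nat.cast_pos.mpr hMn
  set B := ⋃ k ∈ Finset.range Mn, Icc ((k : ℝ) / Mn) (((k : ℝ) + an) / Mn) with hB
  have hsplit : (⋃ k ∈ Finset.range Mi, Icc ((k : ℝ) / Mi) (((k : ℝ) + ai) / Mi)) ∩ B
      = ⋃ k ∈ Finset.range Mi, (B ∩ Icc ((k : ℝ) / Mi) (((k : ℝ) + ai) / Mi)) := by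
    rw [Set.iUnion₂_inter]
    apply Set.iUnion₂_congr
    intro k _
    exact Set.inter_comm _ _
  rw [hsplit]
  calc volume (⋃ k ∈ Finset.range Mi, (B ∩ Icc ((k : ℝ) / Mi) (((k : ℝ) + ai) / Mi)))
      ≤ ∑ k ∈ Finset.range Mi, volume (B ∩ Icc ((k : ℝ) / Mi) (((k : ℝ) + ai) / Mi)) :=
        measure_biUnion_finset_le _ _
    _ ≤ ∑ k ∈ Finset.range Mi, ENNReal.ofReal (an * (ai/Mi) + 2 * an / Mn) := by
        apply Finset.sum_le_sum
        intro k _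
        have hle : (k:ℝ)/Mi ≤ ((k:ℝ) + ai)/Mi := by
          gcongr
          linarith
        have := vol_D_inter_Icc Mn hMn an han0 han1 ((k:ℝ)/Mi) (((k:ℝ) + ai)/Mi) hle
        refine le_trans this (le_of_eq ?_)
        congr 3
        rw [add_div]
        ring
    _ = (Mi : ℝ≥0∞) * ENNReal.ofReal (an * (ai/Mi) + 2 * an / Mn) := by
        rw [Finset.sum_const, Finset.card_range, nsmul_eq_mul]
    _ = ENNReal.ofReal ((Mi:ℝ) * (an * (ai/Mi) + 2 * an / Mn)) := by
        rw [ENNReal.ofReal_mul (by positivity), ENNReal.ofReal_natCast]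
    _ ≤ ENNReal.ofReal (ai * an + 2 * an * Mi / Mn) := by
        apply ENNReal.ofReal_le_ofReal
        have : (Mi:ℝ) * (an * (ai/Mi) + 2 * an / Mn) = ai * an + 2 * an * Mi / Mn := by
          field_simp
        rw [this]


end BC7aux

open Filter MeasureTheory

/-- Borel–Cantelli lemma of the paper: if `(αₙ)` are nonnegative with `∑ αₙ = ∞` and
`αₙ ≤ 1/2`, `(mₙ)` are natural numbers with `αₙ mₙ ∈ ℕ`, and `Mₙ = m₁ ⋯ mₙ`, then for
a.e. `t ∈ [0,1]` there exist arbitrarily large `n` with `dist(t, Mₙ⁻¹ℕ) ≤ Mₙ⁻¹ αₙ`. -/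
theorem stmt7 (α : ℕ → ℝ) (h0 : ∀ n, 0 ≤ α n) (h12 : ∀ n, α n ≤ 1 / 2)
    (hdiv : ¬ Summable α)
    (m : ℕ → ℕ) (hm : ∀ n, 1 ≤ m n)
    (hint : ∀ n, ∃ j : ℕ, α n * m n = j)
    (M : ℕ → ℕ) (hM : ∀ i, M i = ∏ k ∈ Finset.Icc 1 i, m k) :
    ∀ᵐ t : ℝ ∂volume, t ∈ Set.Icc (0 : ℝ) 1 →
      ∀ N : ℕ, ∃ n, N ≤ n ∧
        Metric.infDist t (Set.range fun k : ℕ => (k : ℝ) / M n) ≤ α n / M n := by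
  classical
  have hMpos : ∀ n, 0 < M n := by
    intro n; rw [hM]; exact Finset.prod_pos (fun k _ => hm k)
  have hMr : ∀ n, (0:ℝ) < (M n : ℝ) := fun n => Nat.cast_pos.mpr (hMpos n)
  have hα1 : ∀ n, α n ≤ 1 := fun n => le_trans (h12 n) (by norm_num)
  have hαlt1 : ∀ n, α n < 1 := fun n => lt_of_le_of_lt (h12 n) (by norm_num)
  set D : ℕ → Set ℝ := fun n =>
    ⋃ k ∈ Finset.range (M n), Set.Icc ((k:ℝ)/(M n)) (((k:ℝ) + α n)/(M n)) with hD
  have hDmeas : ∀ n, MeasurableSet (D n) := by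
    intro n
    exact MeasurableSet.biUnion (Finset.range (M n)).countable_toSet
      (fun k _ => measurableSet_Icc)
  have hDvol : ∀ n, volume (D n) = ENNReal.ofReal (α n) :=
    fun n => BC7aux.vol_D (M n) (hMpos n) (α n) (h0 n) (hαlt1 n)
  have hDsub : ∀ n, D n ⊆ Set.Icc (0:ℝ) 1 := by
    intro n t ht
    rw [hD] at ht
    simp only [Set.mem_iUnion, exists_prop, Finset.mem_range, Set.mem_Icc] at ht
    obtain ⟨k, hk, ht1, ht2⟩ := ht
    constructor
    · have h1 : (0:ℝ) ≤ (k:ℝ)/(M n) := by positivity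
      linarith
    · have hk1 : (k:ℝ) + 1 ≤ (M n : ℝ) := by exact_mod_cast hk
      have h2 : ((k:ℝ) + α n)/(M n) ≤ 1 := by
        rw [div_le_one (hMr n)]
        have := h12 n; linarith
      linarith
  have hDdist : ∀ n t, t ∈ D n →
      Metric.infDist t (Set.range fun k : ℕ => (k:ℝ)/(M n)) ≤ α n / M n := by
    intro n t ht
    rw [hD] at ht
    simp only [Set.mem_iUnion, exists_prop, Finset.mem_range, Set.mem_Icc] at ht
    obtain ⟨k, hk, ht1, ht2⟩ := ht
    have h1 : Metric.infDist t (Set.range fun k : ℕ => (k:ℝ)/(M n)) ≤ dist t ((k:ℝ)/(M n)) :=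
      Metric.infDist_le_dist_of_mem ⟨k, rfl⟩
    rw [Real.dist_eq] at h1
    have h2 : |t - (k:ℝ)/(M n)| ≤ α n / M n := by
      rw [abs_le]
      constructor
      · have h3 : (0:ℝ) ≤ α n / M n := div_nonneg (h0 n) (le_of_lt (hMr n))
        linarith
      · rw [add_div] at ht2
        linarith
    linarith
  have hm2 : ∀ n, 0 < α n → 2 ≤ m n := by
    intro n hpos
    by_contra h
    have hm1 : m n = 1 := by have := hm n; omega
    obtain ⟨j, hj⟩ := hint n
    rw [hm1] at hj
    norm_num at hj
    have hj1 : 1 ≤ j := by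
      by_contra hj0
      have hj' : j = 0 := by omega
      rw [hj', Nat.cast_zero] at hj
      rw [hj] at hpos
      exact lt_irrefl _ hpos
    have h4 : (1:ℝ) ≤ α n := by
      rw [hj]; exact_mod_cast hj1
    have := h12 n; linarith
  have hgeo : ∀ n, (∑ j ∈ (Finset.range n).filter (fun j => 0 < α j), (M j : ℝ))
      ≤ 2 * (M n : ℝ) := by
    intro n
    have hsubset : (Finset.range n).filter (fun j => 0 < α j)
        ⊆ (Finset.range n).filter (fun j => 2 ≤ m j) := by
      intro x hx
      rw [Finset.mem_filter] at hx ⊢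
      exact ⟨hx.1, hm2 x hx.2⟩
    calc ∑ j ∈ (Finset.range n).filter (fun j => 0 < α j), (M j : ℝ)
        ≤ ∑ j ∈ (Finset.range n).filter (fun j => 2 ≤ m j), (M j : ℝ) :=
          Finset.sum_le_sum_of_subset_of_nonneg hsubset (fun i _ _ => Nat.cast_nonneg _)
      _ ≤ 2 * (M n : ℝ) := by
          have h5 := BC7aux.geom_M m M hm hM n
          have h6 : ((∑ j ∈ (Finset.range n).filter (fun j => 2 ≤ m j), M j : ℕ) : ℝ)
              ≤ ((2 * M n : ℕ) : ℝ) := Nat.cast_le.mpr h5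
          push_cast at h6
          exact h6
  have hcross : ∀ i n, i < n → volume (D i ∩ D n)
      ≤ ENNReal.ofReal (α i * α n + 2 * α n * (M i) / (M n)) := by
    intro i n _
    exact BC7aux.vol_cross (M i) (M n) (hMpos i) (hMpos n) (α i) (α n)
      (h0 i) (hα1 i) (h0 n) (hα1 n)
  -- the key step
  have hUN : ∀ N : ℕ, 1 ≤ volume (⋃ (n : ℕ) (_ : N ≤ n), D n) := by
    intro N
    apply ENNReal.le_of_forall_pos_le_add
    intro ε hε hfin
    set ε' : ℝ := (ε : ℝ) with hε'def
    have hε'0 : 0 < ε' := by exact_mod_cast hε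
    have hdivN : Tendsto (fun n => ∑ i ∈ Finset.range n, α i) atTop atTop :=
      (not_summable_iff_tendsto_nat_atTop_of_nonneg h0).mp hdiv
    obtain ⟨q, hq⟩ := Filter.eventually_atTop.mp
      (hdivN.eventually_ge_atTop ((max 1 (9/ε')) + ∑ i ∈ Finset.range N, α i))
    set P := max q N with hP
    set s : Finset ℕ := Finset.Icc N P with hs
    set T : ℝ := ∑ n ∈ s, α n with hTdef
    have hT0 : 0 ≤ T := Finset.sum_nonneg (fun n _ => h0 n)
    have hTC : max 1 (9/ε') ≤ T := by
      have he : s = Finset.Ico N (P+1) := by rw [hs, Finset.Ico_add_one_right_eq_Icc]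
      rw [hTdef, he, Finset.sum_Ico_eq_sub _ (le_trans (le_max_right q N) (Nat.le_succ _))]
      have h7 := hq (P+1) (le_trans (le_max_left q N) (Nat.le_succ _))
      linarith
    have hT1 : (1:ℝ) ≤ T := le_trans (le_max_left _ _) hTC
    have hT9 : 9 / ε' ≤ T := le_trans (le_max_right _ _) hTC
    have h9T : (9:ℝ) ≤ ε' * T := by
      have h8 := mul_le_mul_of_nonneg_left hT9 hε'0.le
      rw [mul_div_cancel₀ _ (ne_of_gt hε'0)] at h8
      exact h8
    set E : ℕ → ℕ → ℝ≥0∞ := fun i n =>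
      if i = n then ENNReal.ofReal (α n)
      else if i < n then (if 0 < α i then ENNReal.ofReal (2 * α n * (M i) / (M n)) else 0)
      else (if 0 < α n then ENNReal.ofReal (2 * α i * (M n) / (M i)) else 0) with hE
    have hterm : ∀ i ∈ s, ∀ n ∈ s,
        volume (D i ∩ D n) ≤ ENNReal.ofReal (α i * α n) + E i n := by
      intro i _ n _
      rcases eq_or_ne i n with rfl | hne
      · rw [Set.inter_self, hDvol i]
        simp only [hE, if_pos rfl]
        exact le_add_self
      · rcases hne.lt_or_gt with hlt | hlt
        · simp only [hE, if_neg hne, if_pos hlt]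
          by_cases hpos : 0 < α i
          · rw [if_pos hpos]
            exact le_trans (hcross i n hlt) ENNReal.ofReal_add_le
          · rw [if_neg hpos]
            have hz : volume (D i ∩ D n) = 0 := by
              apply measure_mono_null Set.inter_subset_left
              rw [hDvol i]
              have hzz : α i = 0 := le_antisymm (not_lt.mp hpos) (h0 i)
              rw [hzz]; simp
            rw [hz]
            exact zero_le
        · have hne' : ¬ i = n := hne
          have hnlt : ¬ i < n := not_lt.mpr hlt.le
          simp only [hE, if_neg hne', if_neg hnlt]
          by_cases hpos : 0 < α n
          · rw [if_pos hpos]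
            have h8 : volume (D i ∩ D n) = volume (D n ∩ D i) := by rw [Set.inter_comm]
            rw [h8]
            refine le_trans (hcross n i hlt) ?_
            refine le_trans ENNReal.ofReal_add_le ?_
            rw [mul_comm (α n) (α i)]
          · rw [if_neg hpos]
            have hz : volume (D i ∩ D n) = 0 := by
              apply measure_mono_null Set.inter_subset_right
              rw [hDvol n]
              have hzz : α n = 0 := le_antisymm (not_lt.mp hpos) (h0 n)
              rw [hzz]; simp
            rw [hz]; exact zero_le
    have hkey4 : ∀ (j : ℕ) (w : ℕ → ℝ≥0∞),
        (∀ x, x < j → w x = (if 0 < α x then ENNReal.ofReal (2 * α j * (M x) / (M j)) else 0)) →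
        ∑ x ∈ s.filter (fun x => x < j), w x ≤ ENNReal.ofReal (4 * α j) := by
      intro j w hw
      have e1 : ∑ x ∈ (s.filter (fun x => x < j)).filter (fun x => 0 < α x),
              ENNReal.ofReal (2 * α j * (M x) / (M j))
          = ∑ x ∈ s.filter (fun x => x < j), w x := by
        rw [Finset.sum_filter]
        apply Finset.sum_congr rfl
        intro x hx
        rw [hw x (Finset.mem_filter.mp hx).2]
      rw [← e1]
      have hnneg : ∀ x, (0:ℝ) ≤ 2 * α j * (M x) / (M j) := by
        intro x
        apply div_nonneg _ (Nat.cast_nonneg _)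
        apply mul_nonneg _ (Nat.cast_nonneg _)
        apply mul_nonneg (by norm_num) (h0 j)
      calc ∑ x ∈ (s.filter (fun x => x < j)).filter (fun x => 0 < α x),
              ENNReal.ofReal (2 * α j * (M x) / (M j))
          ≤ ∑ x ∈ (Finset.range j).filter (fun x => 0 < α x),
              ENNReal.ofReal (2 * α j * (M x) / (M j)) := by
            apply Finset.sum_le_sum_of_subset
            intro x hx
            simp only [Finset.mem_filter, Finset.mem_range] at hx ⊢
            exact ⟨hx.1.2, hx.2⟩
        _ = ENNReal.ofReal (∑ x ∈ (Finset.range j).filter (fun x => 0 < α x),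
              2 * α j * (M x) / (M j)) :=
            (ENNReal.ofReal_sum_of_nonneg (fun x _ => hnneg x)).symm
        _ ≤ ENNReal.ofReal (4 * α j) := by
            apply ENNReal.ofReal_le_ofReal
            have e2 : ∑ x ∈ (Finset.range j).filter (fun x => 0 < α x),
                2 * α j * ((M x : ℝ)) / (M j)
                = (2 * α j / (M j)) * ∑ x ∈ (Finset.range j).filter (fun x => 0 < α x), (M x : ℝ) := by
              rw [Finset.mul_sum]
              apply Finset.sum_congr rfl
              intro x _
              ring
            rw [e2]
            have hcoef : (0:ℝ) ≤ 2 * α j / (M j) := by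
              apply div_nonneg _ (Nat.cast_nonneg _)
              apply mul_nonneg (by norm_num) (h0 j)
            calc (2 * α j / (M j)) * ∑ x ∈ (Finset.range j).filter (fun x => 0 < α x), (M x : ℝ)
                ≤ (2 * α j / (M j)) * (2 * (M j : ℝ)) :=
                  mul_le_mul_of_nonneg_left (hgeo j) hcoef
              _ = 4 * α j := by
                  have hMj : ((M j : ℝ)) ≠ 0 := ne_of_gt (hMr j)
                  field_simp
                  ring
    set f : ℝ → ℝ≥0∞ := fun t => ∑ n ∈ s, (D n).indicator (1 : ℝ → ℝ≥0∞) t with hf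
    have hmeas1 : ∀ n : ℕ, Measurable ((D n).indicator (1 : ℝ → ℝ≥0∞)) :=
      fun n => measurable_one.indicator (hDmeas n)
    have hfmeas : Measurable f := by
      apply Finset.measurable_sum
      intro n _
      exact hmeas1 n
    have hint1 : ∫⁻ t, f t = ENNReal.ofReal T := by
      calc ∫⁻ t, f t = ∑ n ∈ s, ∫⁻ t, (D n).indicator (1 : ℝ → ℝ≥0∞) t :=
            lintegral_finset_sum s (fun n _ => hmeas1 n)
        _ = ∑ n ∈ s, volume (D n) := by
            apply Finset.sum_congr rfl
            intro n _
            exact lintegral_indicator_one (hDmeas n)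
        _ = ∑ n ∈ s, ENNReal.ofReal (α n) := by
            apply Finset.sum_congr rfl; intro n _; exact hDvol n
        _ = ENNReal.ofReal T := (ENNReal.ofReal_sum_of_nonneg (fun n _ => h0 n)).symm
    set S : ℝ≥0∞ := ∑ i ∈ s, ∑ n ∈ s, volume (D i ∩ D n) with hSdef
    have hint2 : ∫⁻ t, f t * f t = S := by
      have hfsq : ∀ t, f t * f t
          = ∑ i ∈ s, ∑ n ∈ s, (D i ∩ D n).indicator (1 : ℝ → ℝ≥0∞) t := by
        intro t
        simp only [hf]
        rw [Finset.sum_mul_sum]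
        apply Finset.sum_congr rfl; intro i _
        apply Finset.sum_congr rfl; intro n _
        exact (congrFun Set.inter_indicator_one t).symm
      calc ∫⁻ t, f t * f t
          = ∫⁻ t, ∑ i ∈ s, ∑ n ∈ s, (D i ∩ D n).indicator (1 : ℝ → ℝ≥0∞) t :=
            lintegral_congr (fun t => hfsq t)
        _ = ∑ i ∈ s, ∫⁻ t, ∑ n ∈ s, (D i ∩ D n).indicator (1 : ℝ → ℝ≥0∞) t :=
            lintegral_finset_sum s (fun i _ => Finset.measurable_sum s
              (fun n _ => measurable_one.indicator ((hDmeas i).inter (hDmeas n))))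
        _ = S := by
            rw [hSdef]
            apply Finset.sum_congr rfl; intro i _
            rw [lintegral_finset_sum s
              (fun n _ => measurable_one.indicator ((hDmeas i).inter (hDmeas n)))]
            apply Finset.sum_congr rfl; intro n _
            exact lintegral_indicator_one ((hDmeas i).inter (hDmeas n))
    have hsum1 : ∑ i ∈ s, ∑ n ∈ s, ENNReal.ofReal (α i * α n) = ENNReal.ofReal (T * T) := by
      calc ∑ i ∈ s, ∑ n ∈ s, ENNReal.ofReal (α i * α n)
          = ∑ i ∈ s, ∑ n ∈ s, ENNReal.ofReal (α i) * ENNReal.ofReal (α n) := by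
            apply Finset.sum_congr rfl; intro i _
            apply Finset.sum_congr rfl; intro n _
            exact ENNReal.ofReal_mul (h0 i)
        _ = (∑ i ∈ s, ENNReal.ofReal (α i)) * (∑ n ∈ s, ENNReal.ofReal (α n)) :=
            (Finset.sum_mul_sum s s _ _).symm
        _ = ENNReal.ofReal T * ENNReal.ofReal T := by
            rw [← ENNReal.ofReal_sum_of_nonneg (fun n _ => h0 n)]
        _ = ENNReal.ofReal (T * T) := (ENNReal.ofReal_mul hT0).symm
    have hEii : ∀ i : ℕ, E i i = ENNReal.ofReal (α i) := by
      intro i; simp only [hE, if_pos rfl]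
    have hsplit3 : ∀ i ∈ s, ∑ n ∈ s, E i n
        = (∑ n ∈ s.filter (fun n => n < i), E i n) + (E i i
          + ∑ n ∈ s.filter (fun n => i < n), E i n) := by
      intro i hi
      rw [← Finset.sum_filter_add_sum_filter_not s (fun n => n < i) (E i)]
      congr 1
      have e3 : s.filter (fun n => ¬ n < i) = insert i (s.filter (fun n => i < n)) := by
        ext x
        simp only [Finset.mem_filter, Finset.mem_insert, not_lt]
        constructor
        · rintro ⟨hx, hxi⟩
          rcases eq_or_lt_of_le hxi with h | h
          · left; exact h.symm
          · right; exact ⟨hx, h⟩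
        · rintro (rfl | ⟨hx, hxi⟩)
          · exact ⟨hi, le_rfl⟩
          · exact ⟨hx, hxi.le⟩
      rw [e3, Finset.sum_insert (by simp)]
    have hEbound : ∑ i ∈ s, ∑ n ∈ s, E i n ≤ ENNReal.ofReal (9 * T) := by
      have e4 : ∑ i ∈ s, ∑ n ∈ s, E i n
          = (∑ i ∈ s, ∑ n ∈ s.filter (fun n => n < i), E i n)
            + ((∑ i ∈ s, E i i) + ∑ i ∈ s, ∑ n ∈ s.filter (fun n => i < n), E i n) := by
        calc ∑ i ∈ s, ∑ n ∈ s, E i n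
            = ∑ i ∈ s, ((∑ n ∈ s.filter (fun n => n < i), E i n) + (E i i
              + ∑ n ∈ s.filter (fun n => i < n), E i n)) :=
              Finset.sum_congr rfl hsplit3
          _ = _ := by
              rw [Finset.sum_add_distrib]
              congr 1
              rw [Finset.sum_add_distrib]
      rw [e4]
      have hsum4 : ∑ i ∈ s, ENNReal.ofReal (4 * α i) = ENNReal.ofReal (4 * T) := by
        rw [← ENNReal.ofReal_sum_of_nonneg (fun i _ => by
          apply mul_nonneg (by norm_num) (h0 i))]
        rw [← Finset.mul_sum]
      have hb1 : ∑ i ∈ s, ∑ n ∈ s.filter (fun n => n < i), E i n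
          ≤ ENNReal.ofReal (4 * T) := by
        calc ∑ i ∈ s, ∑ n ∈ s.filter (fun n => n < i), E i n
            ≤ ∑ i ∈ s, ENNReal.ofReal (4 * α i) := by
              apply Finset.sum_le_sum
              intro i _
              apply hkey4 i (fun n => E i n)
              intro x hx
              simp only [hE]
              rw [if_neg (ne_of_gt hx), if_neg (not_lt.mpr hx.le)]
          _ = ENNReal.ofReal (4 * T) := hsum4
      have hb2 : ∑ i ∈ s, E i i ≤ ENNReal.ofReal T := by
        have hb2e : ∑ i ∈ s, E i i = ∑ i ∈ s, ENNReal.ofReal (α i) :=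
          Finset.sum_congr rfl (fun i _ => hEii i)
        rw [hb2e, ← ENNReal.ofReal_sum_of_nonneg (fun n _ => h0 n)]
      have hb3 : ∑ i ∈ s, ∑ n ∈ s.filter (fun n => i < n), E i n
          ≤ ENNReal.ofReal (4 * T) := by
        have hswap : ∑ i ∈ s, ∑ n ∈ s.filter (fun n => i < n), E i n
            = ∑ n ∈ s, ∑ i ∈ s.filter (fun i => i < n), E i n := by
          apply Finset.sum_comm'
          intro x y
          simp only [Finset.mem_filter]
          constructor
          · rintro ⟨hx, hy, hxy⟩; exact ⟨⟨hx, hxy⟩, hy⟩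
          · rintro ⟨⟨hx, hxy⟩, hy⟩; exact ⟨hx, hy, hxy⟩
        rw [hswap]
        calc ∑ n ∈ s, ∑ i ∈ s.filter (fun i => i < n), E i n
            ≤ ∑ n ∈ s, ENNReal.ofReal (4 * α n) := by
              apply Finset.sum_le_sum
              intro n _
              apply hkey4 n (fun i => E i n)
              intro x hx
              simp only [hE]
              rw [if_neg (ne_of_lt hx), if_pos hx]
          _ = ENNReal.ofReal (4 * T) := hsum4
      calc (∑ i ∈ s, ∑ n ∈ s.filter (fun n => n < i), E i n)
            + ((∑ i ∈ s, E i i) + ∑ i ∈ s, ∑ n ∈ s.filter (fun n => i < n), E i n)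
          ≤ ENNReal.ofReal (4 * T) + (ENNReal.ofReal T + ENNReal.ofReal (4 * T)) :=
            add_le_add hb1 (add_le_add hb2 hb3)
        _ = ENNReal.ofReal (9 * T) := by
            rw [← ENNReal.ofReal_add hT0 (by linarith), ← ENNReal.ofReal_add (by linarith) (by linarith)]
            congr 1
            ring
    have hSbound : S ≤ ENNReal.ofReal (T * T + 9 * T) := by
      calc S ≤ ∑ i ∈ s, ∑ n ∈ s, (ENNReal.ofReal (α i * α n) + E i n) := by
            rw [hSdef]
            apply Finset.sum_le_sum; intro i hi
            apply Finset.sum_le_sum; intro n hn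
            exact hterm i hi n hn
        _ = (∑ i ∈ s, ∑ n ∈ s, ENNReal.ofReal (α i * α n)) + ∑ i ∈ s, ∑ n ∈ s, E i n := by
            rw [← Finset.sum_add_distrib]
            apply Finset.sum_congr rfl; intro i _
            rw [← Finset.sum_add_distrib]
        _ ≤ ENNReal.ofReal (T*T) + ENNReal.ofReal (9*T) := by
            rw [hsum1]
            exact add_le_add_right hEbound _
        _ = ENNReal.ofReal (T*T + 9*T) := (ENNReal.ofReal_add (by nlinarith) (by linarith)).symm
    set U : Set ℝ := ⋃ n ∈ s, D n with hU
    have hUmeas : MeasurableSet U :=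
      MeasurableSet.biUnion s.countable_toSet (fun n _ => hDmeas n)
    have hCS : ENNReal.ofReal T * ENNReal.ofReal T ≤ S * volume U := by
      set g : ℝ → ℝ≥0∞ := U.indicator (1 : ℝ → ℝ≥0∞) with hg
      have hfg : ∀ t, f t = (f * g) t := by
        intro t
        by_cases htU : t ∈ U
        · simp [hg, Set.indicator_of_mem htU]
        · have hft : f t = 0 := by
            simp only [hf]
            apply Finset.sum_eq_zero
            intro n hn
            apply Set.indicator_of_notMem
            intro htn
            exact htU (Set.mem_biUnion hn htn)
          simp [hg, Set.indicator_of_notMem htU, hft]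
      have h2conj : (2:ℝ).HolderConjugate 2 := Real.holderConjugate_iff.mpr ⟨one_lt_two, by norm_num⟩
      have hgmeas : Measurable g := measurable_one.indicator hUmeas
      have hCS0 := ENNReal.lintegral_mul_le_Lp_mul_Lq volume h2conj
        hfmeas.aemeasurable hgmeas.aemeasurable
      have hsq : ∀ x : ℝ≥0∞, x ^ (2:ℝ) = x * x := by
        intro x
        rw [show (2:ℝ) = ((2:ℕ):ℝ) by norm_num, ENNReal.rpow_natCast, sq]
      have hrw1 : ∫⁻ (a : ℝ), (f * g) a = ENNReal.ofReal T := by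
        rw [← lintegral_congr hfg]
        exact hint1
      have hrw2 : ∫⁻ (a : ℝ), f a ^ (2:ℝ) = S := by
        calc ∫⁻ (a : ℝ), f a ^ (2:ℝ) = ∫⁻ (a : ℝ), f a * f a :=
              lintegral_congr (fun a => hsq (f a))
          _ = S := hint2
      have hrw3 : ∫⁻ (a : ℝ), g a ^ (2:ℝ) = volume U := by
        calc ∫⁻ (a : ℝ), g a ^ (2:ℝ) = ∫⁻ (a : ℝ), g a := by
              apply lintegral_congr
              intro a
              rw [hsq (g a)]
              simp only [hg]
              by_cases haU : a ∈ U
              · simp [Set.indicator_of_mem haU]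
              · simp [Set.indicator_of_notMem haU]
          _ = volume U := lintegral_indicator_one hUmeas
      rw [hrw1, hrw2, hrw3] at hCS0
      have hhalf : ∀ x : ℝ≥0∞, x ^ ((1:ℝ)/2) * x ^ ((1:ℝ)/2) = x := by
        intro x
        rw [← ENNReal.rpow_add_of_nonneg ((1:ℝ)/2) ((1:ℝ)/2) (by norm_num) (by norm_num)]
        norm_num
      calc ENNReal.ofReal T * ENNReal.ofReal T
          ≤ (S ^ ((1:ℝ)/2) * volume U ^ ((1:ℝ)/2)) * (S ^ ((1:ℝ)/2) * volume U ^ ((1:ℝ)/2)) :=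
            mul_le_mul' hCS0 hCS0
        _ = (S ^ ((1:ℝ)/2) * S ^ ((1:ℝ)/2)) * (volume U ^ ((1:ℝ)/2) * volume U ^ ((1:ℝ)/2)) := by
            ring
        _ = S * volume U := by rw [hhalf, hhalf]
    have hTT9 : (0:ℝ) < T*T + 9*T := by nlinarith
    have hkey : ENNReal.ofReal (T*T) ≤ ENNReal.ofReal (T*T + 9*T) * volume U := by
      calc ENNReal.ofReal (T*T) = ENNReal.ofReal T * ENNReal.ofReal T := ENNReal.ofReal_mul hT0
        _ ≤ S * volume U := hCS
        _ ≤ ENNReal.ofReal (T*T+9*T) * volume U := mul_le_mul_left hSbound _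
    have hYlb : ENNReal.ofReal (T*T/(T*T+9*T)) ≤ volume U := by
      rw [ENNReal.ofReal_div_of_pos hTT9]
      exact ENNReal.div_le_of_le_mul' hkey
    have hUsub : U ⊆ ⋃ (n : ℕ) (_ : N ≤ n), D n := by
      intro t ht
      simp only [hU, Set.mem_iUnion, exists_prop] at ht
      obtain ⟨n, hn, htn⟩ := ht
      rw [hs, Finset.mem_Icc] at hn
      exact Set.mem_iUnion.mpr ⟨n, Set.mem_iUnion.mpr ⟨hn.1, htn⟩⟩
    have h1r : (1:ℝ) ≤ T*T/(T*T+9*T) + ε' := by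
      have hd : (1 - ε') * (T*T+9*T) ≤ T*T := by
        nlinarith [mul_le_mul_of_nonneg_right h9T (le_trans zero_le_one hT1),
          mul_nonneg (mul_nonneg hε'0.le (by norm_num : (0:ℝ) ≤ 9)) hT0]
      have h5 : (1:ℝ) - ε' ≤ T*T/(T*T+9*T) := (le_div_iff₀ hTT9).mpr hd
      linarith
    calc (1:ℝ≥0∞) = ENNReal.ofReal 1 := ENNReal.ofReal_one.symm
      _ ≤ ENNReal.ofReal (T*T/(T*T+9*T) + ε') := ENNReal.ofReal_le_ofReal h1r
      _ ≤ ENNReal.ofReal (T*T/(T*T+9*T)) + ENNReal.ofReal ε' := ENNReal.ofReal_add_le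
      _ ≤ volume (⋃ (n : ℕ) (_ : N ≤ n), D n) + ↑ε := by
          apply add_le_add
          · exact le_trans hYlb (measure_mono hUsub)
          · exact le_of_eq ENNReal.ofReal_coe_nnreal
  -- conclusion from the key step
  have hfinal : ∀ N : ℕ, volume (Set.Icc (0:ℝ) 1 \ ⋃ (n : ℕ) (_ : N ≤ n), D n) = 0 := by
    intro N
    have hUsub : (⋃ (n : ℕ) (_ : N ≤ n), D n) ⊆ Set.Icc (0:ℝ) 1 := by
      intro t ht
      simp only [Set.mem_iUnion, exists_prop] at ht
      obtain ⟨n, _, htn⟩ := ht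
      exact hDsub n htn
    have hUmeas : MeasurableSet (⋃ (n : ℕ) (_ : N ≤ n), D n) :=
      MeasurableSet.iUnion (fun n => MeasurableSet.iUnion (fun _ => hDmeas n))
    have hfin : volume (⋃ (n : ℕ) (_ : N ≤ n), D n) ≠ ⊤ := by
      apply ne_of_lt
      calc volume (⋃ (n : ℕ) (_ : N ≤ n), D n) ≤ volume (Set.Icc (0:ℝ) 1) :=
            measure_mono hUsub
        _ < ⊤ := by rw [Real.volume_Icc]; exact ENNReal.ofReal_lt_top
    rw [measure_diff hUsub hUmeas.nullMeasurableSet hfin]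
    have h1 : volume (Set.Icc (0:ℝ) 1) = 1 := by
      rw [Real.volume_Icc]; norm_num
    rw [h1]
    exact tsub_eq_zero_of_le (hUN N)
  -- assemble the a.e. statement
  rw [MeasureTheory.ae_iff]
  refine measure_mono_null ?_ (measure_iUnion_null (fun N => hfinal N))
  intro t ht
  simp only [Set.mem_setOf_eq] at ht
  push_neg at ht
  obtain ⟨ht01, N, hN⟩ := ht
  refine Set.mem_iUnion.mpr ⟨N, ht01, ?_⟩
  intro htU
  simp only [Set.mem_iUnion, exists_prop] at htU
  obtain ⟨n, hn, htn⟩ := htU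
  exact absurd (hDdist n t htn) (not_le.mpr (hN n hn))
end

section
/- Let X be a Banach space, γ : [0,1] → X Lipschitz, A ⊆ [0,1] measurable with positive measure, γ bi-Lipschitz on A with constant L, and suppose s₁, s₂ ∈ A satisfy |A ∩ [s₁,s₂]| ≥ (1 − 1/(2L²))|s₂ − s₁| with s₁ ≠ s₂. Then for any x* ∈ X* with ‖x*‖ = 1 and |x*(γ(s₂) − γ(s₁))| > ‖γ(s₂) − γ(s₁)‖/2, the set x*(γ(A)) ⊂ ℝ has positive Lebesgue measure. -/
open MeasureTheory
open scoped ENNReal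

/-- If `γ` is Lipschitz on `[0,1]`, bi-Lipschitz with constant `L` on a positive-measure
set `A`, `s₁ ≠ s₂ ∈ A` satisfy `|A ∩ [s₁,s₂]| ≥ (1 - 1/(2L²))|s₂ - s₁|`, and `x* ∈ X*`
with `‖x*‖ = 1` satisfies `|x*(γ(s₂) - γ(s₁))| > ‖γ(s₂) - γ(s₁)‖/2`, then `x*(γ(A))`
has positive Lebesgue measure. -/
theorem stmt16 {X : Type*} [NormedAddCommGroup X] [NormedSpace ℝ X]
    (γ : ℝ → X) (L : NNReal) (hL : 0 < L)
    (hγ : LipschitzOnWith L γ (Set.Icc 0 1))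
    (A : Set ℝ) (hA : A ⊆ Set.Icc 0 1) (hAm : MeasurableSet A) (hApos : 0 < volume A)
    (hbi : ∀ s ∈ A, ∀ t ∈ A, |s - t| ≤ (L : ℝ) * ‖γ s - γ t‖)
    (s₁ s₂ : ℝ) (hs₁ : s₁ ∈ A) (hs₂ : s₂ ∈ A) (hne : s₁ ≠ s₂)
    (hd : ENNReal.ofReal ((1 - 1 / (2 * (L : ℝ) ^ 2)) * |s₂ - s₁|) ≤
      volume (A ∩ Set.uIcc s₁ s₂))
    (φ : X →L[ℝ] ℝ) (hφ : ‖φ‖ = 1)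
    (hbig : ‖γ s₂ - γ s₁‖ / 2 < |φ (γ s₂ - γ s₁)|) :
    0 < volume (φ '' (γ '' A)) := by
  set f : ℝ → ℝ := fun t => φ (γ t) with hf_def
  have hLpos : (0 : ℝ) < L := hL
  set I : Set ℝ := Set.uIcc s₁ s₂ with hI_def
  have hIsub : I ⊆ Set.Icc 0 1 := Set.uIcc_subset_Icc (hA hs₁) (hA hs₂)
  -- f is L-Lipschitz on Icc 0 1
  have hfLip : LipschitzOnWith L f (Set.Icc 0 1) := by
    have := (φ.lipschitz).comp_lipschitzOnWith hγ
    rwa [show ‖φ‖₊ * L = L by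
      ext; simp [← norm_toNNReal, hφ]] at this
  have hfI : LipschitzOnWith L f I := hfLip.mono hIsub
  -- volume of I
  have hvolI : volume I = ENNReal.ofReal |s₂ - s₁| := by
    rw [hI_def, Set.uIcc, Real.volume_Icc, max_sub_min_eq_abs]
  set d : ℝ := |s₂ - s₁| with hd_def
  have hdpos : 0 < d := abs_pos.mpr (sub_ne_zero.mpr (Ne.symm hne))
  -- the norm difference bound
  have hnorm : d ≤ (L : ℝ) * ‖γ s₂ - γ s₁‖ := hbi s₂ hs₂ s₁ hs₁
  -- lower bound on volume of f '' I via the intermediate value theorem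
  have hIVT : Set.uIcc (f s₁) (f s₂) ⊆ f '' I :=
    intermediate_value_uIcc (hfI.continuousOn)
  have hfdiff : |f s₂ - f s₁| = |φ (γ s₂ - γ s₁)| := by
    simp [hf_def, map_sub]
  have hlowI : ENNReal.ofReal |φ (γ s₂ - γ s₁)| ≤ volume (f '' I) := by
    calc ENNReal.ofReal |φ (γ s₂ - γ s₁)| = volume (Set.uIcc (f s₁) (f s₂)) := by
          rw [Set.uIcc, Real.volume_Icc, max_sub_min_eq_abs]
          rw [hfdiff]
        _ ≤ volume (f '' I) := measure_mono hIVT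
  -- upper bound on volume of f '' (I \ A)
  have himB : volume (f '' (I \ A)) ≤ (L : ℝ≥0∞) * volume (I \ A) := by
    have h := (hfI.mono (Set.diff_subset : I \ A ⊆ I)).hausdorffMeasure_image_le
      (d := 1) zero_le_one
    rwa [hausdorffMeasure_real, ENNReal.rpow_one] at h
  have hvolB : volume (I \ A) ≤ volume I - ENNReal.ofReal ((1 - 1 / (2 * (L : ℝ) ^ 2)) * d) := by
    have h1 : volume (I \ A) = volume I - volume (I ∩ A) := by
      rw [show I \ A = I \ (I ∩ A) by ext x; simp only [Set.mem_diff, Set.mem_inter_iff]; tauto]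
      exact measure_diff Set.inter_subset_left
        ((measurableSet_uIcc.inter hAm).nullMeasurableSet)
        ((measure_mono Set.inter_subset_left).trans_lt
            (by rw [hvolI]; exact ENNReal.ofReal_lt_top)).ne
    rw [h1]
    exact tsub_le_tsub_left (le_trans hd (by rw [Set.inter_comm])) _
  -- the key numeric bound : L * (volume I - ofReal ((1 - 1/(2L²)) d)) ≤ ofReal (d / (2 L))
  have hkey : (L : ℝ≥0∞) * (volume I - ENNReal.ofReal ((1 - 1 / (2 * (L : ℝ) ^ 2)) * d))
      ≤ ENNReal.ofReal (d / (2 * L)) := by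
    rw [hvolI]
    rcases le_or_gt (1 : ℝ) (2 * (L : ℝ) ^ 2) with h2 | h2
    · have hc : (0 : ℝ) ≤ 1 - 1 / (2 * (L : ℝ) ^ 2) := by
        rw [sub_nonneg, div_le_one (by positivity)]; exact h2
      have : ENNReal.ofReal d - ENNReal.ofReal ((1 - 1 / (2 * (L : ℝ) ^ 2)) * d)
          = ENNReal.ofReal (d / (2 * (L : ℝ) ^ 2)) := by
        rw [← ENNReal.ofReal_sub _ (by positivity)]
        ring_nf
      rw [hd_def] at this ⊢
      rw [this, ← ENNReal.ofReal_coe_nnreal, ← ENNReal.ofReal_mul (by positivity)]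
      apply ENNReal.ofReal_le_ofReal
      have heq : (L : ℝ) * (|s₂ - s₁| / (2 * (L : ℝ) ^ 2)) = |s₂ - s₁| / (2 * (L : ℝ)) := by
        field_simp
      exact le_of_eq heq
    · refine le_trans (mul_le_mul_right (tsub_le_self) _) ?_
      rw [← ENNReal.ofReal_coe_nnreal, ← ENNReal.ofReal_mul (by positivity)]
      apply ENNReal.ofReal_le_ofReal
      rw [le_div_iff₀ (by positivity)]
      nlinarith
  -- strict inequality: ofReal (d/(2L)) < volume (f '' I)
  have hstrict : ENNReal.ofReal (d / (2 * L)) < volume (f '' I) := by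
    refine lt_of_lt_of_le ?_ hlowI
    apply ENNReal.ofReal_lt_ofReal_iff_of_nonneg (by positivity) |>.mpr
    have : d / (2 * L) ≤ ‖γ s₂ - γ s₁‖ / 2 := by
      rw [div_le_div_iff₀ (by positivity) (by norm_num)]
      nlinarith
    linarith
  -- conclude
  rw [pos_iff_ne_zero]
  intro hzero
  have hsub : f '' (A ∩ I) ⊆ φ '' (γ '' A) := by
    rw [← Set.image_comp]
    exact Set.image_mono Set.inter_subset_left
  have h0 : volume (f '' (A ∩ I)) = 0 :=
    le_antisymm (le_trans (measure_mono hsub) hzero.le) (zero_le)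
  have hcover : f '' I ⊆ f '' (A ∩ I) ∪ f '' (I \ A) := by
    rw [← Set.image_union]
    apply Set.image_mono
    intro x hx
    by_cases hxA : x ∈ A
    · exact Or.inl ⟨hxA, hx⟩
    · exact Or.inr ⟨hx, hxA⟩
  have : volume (f '' I) ≤ ENNReal.ofReal (d / (2 * L)) := by
    calc volume (f '' I) ≤ volume (f '' (A ∩ I)) + volume (f '' (I \ A)) :=
          (measure_mono hcover).trans (measure_union_le _ _)
      _ = volume (f '' (I \ A)) := by rw [h0, zero_add]
      _ ≤ (L : ℝ≥0∞) * volume (I \ A) := himB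
      _ ≤ (L : ℝ≥0∞) * (volume I - ENNReal.ofReal ((1 - 1 / (2 * (L : ℝ) ^ 2)) * d)) :=
          mul_le_mul_right hvolB _
      _ ≤ ENNReal.ofReal (d / (2 * L)) := hkey
  exact absurd this (not_le.mpr hstrict)
end

section
/- Let X be a Banach space, γ : [0,1] → X Lipschitz, A ⊆ [0,1] of positive measure on which γ is bi-Lipschitz with constant L. Define T : X* → L^∞(A) by T(x*) = derivative of x*∘γ restricted to A. Then T is a bounded linear map with ‖T‖ ≤ L, its kernel is a closed linear subspace of X*, and x*(γ(A)) has Lebesgue measure zero if and only if x* ∈ ker T. Moreover ker T ≠ X*. -/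
open MeasureTheory Set
open scoped NNReal ENNReal Topology

lemma lipOn_vol_image_le {f : ℝ → ℝ} {K : ℝ≥0} {s : Set ℝ} (h : LipschitzOnWith K f s) :
    volume (f '' s) ≤ K * volume s := by
  have h1 := h.hausdorffMeasure_image_le (zero_le_one (α := ℝ))
  rwa [MeasureTheory.hausdorffMeasure_real, ENNReal.rpow_one] at h1

lemma exists_lip_ext {f : ℝ → ℝ} {K : ℝ≥0} (hf : LipschitzOnWith K f (Set.Icc 0 1)) :
    ∃ g : ℝ → ℝ, LipschitzWith K g ∧
      ∀ᵐ t ∂(volume : Measure ℝ), t ∈ Set.Ioo (0:ℝ) 1 →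
        DifferentiableWithinAt ℝ f (Set.Icc 0 1) t ∧
        derivWithin f (Set.Icc 0 1) t = deriv g t ∧ |deriv g t| ≤ K := by
  obtain ⟨g, hgl, heq⟩ := hf.extend_real
  refine ⟨g, hgl, ?_⟩
  filter_upwards [hgl.ae_differentiableAt (μ := volume)] with t hd ht
  have hIcc : Set.Icc (0:ℝ) 1 ∈ 𝓝 t := Icc_mem_nhds ht.1 ht.2
  have hfg : f =ᶠ[𝓝 t] g := Filter.eventuallyEq_of_mem hIcc heq
  have hdf : DifferentiableAt ℝ f t := hfg.differentiableAt_iff.2 hd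
  refine ⟨hdf.differentiableWithinAt, ?_, ?_⟩
  · rw [derivWithin_of_mem_nhds hIcc, hfg.deriv_eq]
  · calc |deriv g t| = ‖fderiv ℝ g t 1‖ := by
          rw [fderiv_apply_one_eq_deriv]; exact (Real.norm_eq_abs _).symm
    _ ≤ ‖fderiv ℝ g t‖ * ‖(1:ℝ)‖ := (fderiv ℝ g t).le_opNorm 1
    _ ≤ K * 1 := by
          gcongr
          · exact norm_fderiv_le_of_lipschitz ℝ hgl
          · simp
    _ = K := mul_one _

lemma vol_le_of_expand {f : ℝ → ℝ} {n : ℝ≥0} {P : Set ℝ}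
    (h : ∀ t ∈ P, ∀ u ∈ P, |t - u| ≤ (n : ℝ) * |f t - f u|) :
    volume P ≤ n * volume (f '' P) := by
  classical
  rcases Set.eq_empty_or_nonempty P with hP | ⟨t₀, ht₀⟩
  · simp [hP]
  set g : ℝ → ℝ := fun y => if hy : ∃ t ∈ P, f t = y then hy.choose else t₀ with hg
  have hgP : ∀ y (hy : ∃ t ∈ P, f t = y), g y ∈ P ∧ f (g y) = y := by
    intro y hy
    simp only [hg, dif_pos hy]
    exact ⟨hy.choose_spec.1, hy.choose_spec.2⟩
  have hlip : LipschitzOnWith n g (f '' P) := by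
    rw [lipschitzOnWith_iff_dist_le_mul]
    rintro y₁ ⟨t₁, ht₁, rfl⟩ y₂ ⟨t₂, ht₂, rfl⟩
    obtain ⟨hgp1, hfg1⟩ := hgP _ ⟨t₁, ht₁, rfl⟩
    obtain ⟨hgp2, hfg2⟩ := hgP _ ⟨t₂, ht₂, rfl⟩
    rw [Real.dist_eq, Real.dist_eq]
    calc |g (f t₁) - g (f t₂)| ≤ n * |f (g (f t₁)) - f (g (f t₂))| := h _ hgp1 _ hgp2
    _ = n * |f t₁ - f t₂| := by rw [hfg1, hfg2]
  have hsub : P ⊆ g '' (f '' P) := by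
    intro t ht
    obtain ⟨hgp, hfg⟩ := hgP (f t) ⟨t, ht, rfl⟩
    have h2 : |t - g (f t)| ≤ (n : ℝ) * |f t - f (g (f t))| := h _ ht _ hgp
    rw [hfg, sub_self, abs_zero, mul_zero] at h2
    have h3 : t = g (f t) := by
      have := abs_nonpos_iff.1 h2
      linarith [sub_eq_zero.1 this]
    exact ⟨f t, ⟨t, ht, rfl⟩, h3.symm⟩
  calc volume P ≤ volume (g '' (f '' P)) := measure_mono hsub
  _ ≤ n * volume (f '' P) := lipOn_vol_image_le hlip



lemma null_of_local_expansion {f : ℝ → ℝ} {A : Set ℝ} (hA : A ⊆ Set.Icc 0 1)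
    (hnull : volume (f '' A) = 0)
    (E : Set ℝ) (hE : E ⊆ A)
    (hloc : ∀ t ∈ E, ∃ c > (0:ℝ), ∃ δ > (0:ℝ),
      ∀ u ∈ A, |u - t| ≤ δ → |t - u| ≤ c * |f t - f u|) :
    volume E = 0 := by
  classical
  set S : ℕ × ℕ × ℕ → Set ℝ := fun p =>
    {t ∈ E | ∀ u ∈ A, |u - t| ≤ 1 / (p.2.1 + 1) → |t - u| ≤ (p.1 + 1) * |f t - f u|} ∩
      Set.Icc (p.2.2 / (p.2.1 + 1)) ((p.2.2 + 1) / (p.2.1 + 1)) with hS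
  have hcover : E ⊆ ⋃ p : ℕ × ℕ × ℕ, S p := by
    intro t ht
    obtain ⟨c, hc, δ, hδ, hcd⟩ := hloc t ht
    obtain ⟨n, hn⟩ := exists_nat_ge c
    obtain ⟨m, hm⟩ := exists_nat_ge (1 / δ)
    have hm1 : (0:ℝ) < (m:ℝ) + 1 := by positivity
    have hmδ : 1 / ((m:ℝ) + 1) ≤ δ := by
      rw [div_le_iff₀ hm1]
      have : 1 / δ ≤ (m:ℝ) + 1 := hm.trans (by linarith)
      calc (1:ℝ) = δ * (1/δ) := by field_simp
      _ ≤ δ * ((m:ℝ)+1) := by nlinarith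
      _ = δ * (m+1) := rfl
    have htI : t ∈ Set.Icc (0:ℝ) 1 := hA (hE ht)
    set j : ℕ := ⌊t * ((m:ℝ) + 1)⌋₊ with hj
    refine Set.mem_iUnion.2 ⟨⟨n, m, j⟩, ⟨⟨ht, ?_⟩, ?_, ?_⟩⟩
    · intro u hu hdist
      calc |t - u| ≤ c * |f t - f u| := hcd u hu (hdist.trans hmδ)
      _ ≤ ((n:ℝ) + 1) * |f t - f u| := by
          have := abs_nonneg (f t - f u); nlinarith
    · show (j:ℝ) / ((m:ℝ)+1) ≤ t
      rw [div_le_iff₀ hm1]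
      exact (Nat.floor_le (by nlinarith [htI.1])).trans (le_refl _) |>.trans (le_refl _)
    · show t ≤ ((j:ℝ)+1) / ((m:ℝ)+1)
      rw [le_div_iff₀ hm1]
      exact (Nat.lt_floor_add_one (t * ((m:ℝ)+1))).le
  have hSnull : ∀ p, volume (S p) = 0 := by
    rintro ⟨n, m, j⟩
    have hm1 : (0:ℝ) < (m:ℝ) + 1 := by positivity
    have hexp : ∀ t ∈ S (n, m, j), ∀ u ∈ S (n, m, j),
        |t - u| ≤ (((n:ℝ≥0) + 1 : ℝ≥0) : ℝ) * |f t - f u| := by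
      rintro t ⟨⟨htE, htgood⟩, htI⟩ u ⟨⟨huE, _⟩, huI⟩
      have hd : |u - t| ≤ 1 / ((m:ℝ) + 1) := by
        rw [abs_sub_le_iff]
        constructor
        · have := htI.1; have := huI.2
          have : u - t ≤ ((j:ℝ)+1)/((m:ℝ)+1) - (j:ℝ)/((m:ℝ)+1) := by linarith
          calc u - t ≤ ((j:ℝ)+1)/((m:ℝ)+1) - (j:ℝ)/((m:ℝ)+1) := this
          _ = 1 / ((m:ℝ)+1) := by field_simp; ring
        · have := huI.1; have := htI.2
          calc t - u ≤ ((j:ℝ)+1)/((m:ℝ)+1) - (j:ℝ)/((m:ℝ)+1) := by linarith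
          _ = 1 / ((m:ℝ)+1) := by field_simp; ring
      have := htgood u (hE huE) hd
      push_cast
      exact this
    have h1 := vol_le_of_expand hexp
    have h2 : volume (f '' S (n, m, j)) = 0 :=
      measure_mono_null (Set.image_mono (f := f) (fun t ht => hE ht.1.1)) hnull
    rw [h2, mul_zero] at h1
    exact le_antisymm h1 zero_le
  exact measure_mono_null hcover (by
    refine measure_mono_null (le_refl _) ?_
    exact le_antisymm ((measure_iUnion_le _).trans (by simp [hSnull])) zero_le)

set_option maxHeartbeats 1000000 in
set_option synthInstance.maxHeartbeats 200000 in
/-- For `γ : [0,1] → X` Lipschitz, bi-Lipschitz with constant `L` on a set `A` of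
positive measure, the map `T : X* → L^∞(A)`, `T(x*) = (x* ∘ γ)'|_A`, is a bounded
linear map with `‖T‖ ≤ L`, its kernel is a closed linear subspace of `X*`, `x*(γ(A))`
is Lebesgue null iff `x* ∈ ker T`, and `ker T ≠ X*`. -/
theorem stmt18 {X : Type*} [NormedAddCommGroup X] [NormedSpace ℝ X]
    (γ : ℝ → X) (L : NNReal) (hL : 0 < L)
    (hγ : LipschitzOnWith L γ (Set.Icc 0 1))
    (A : Set ℝ) (hA : A ⊆ Set.Icc 0 1) (hAm : MeasurableSet A) (hApos : 0 < volume A)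
    (hbi : ∀ s ∈ A, ∀ t ∈ A, |s - t| ≤ (L : ℝ) * ‖γ s - γ t‖) :
    ∃ T : (X →L[ℝ] ℝ) →L[ℝ] (Lp ℝ ⊤ (volume.restrict A)),
      ‖T‖ ≤ (L : ℝ) ∧
      (∀ φ : X →L[ℝ] ℝ, ∀ᵐ t ∂(volume.restrict A),
        (T φ : ℝ → ℝ) t = derivWithin (fun u => φ (γ u)) (Set.Icc 0 1) t) ∧
      IsClosed {φ : X →L[ℝ] ℝ | T φ = 0} ∧
      (∀ φ : X →L[ℝ] ℝ, volume (φ '' (γ '' A)) = 0 ↔ T φ = 0) ∧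
      {φ : X →L[ℝ] ℝ | T φ = 0} ≠ Set.univ := by
  classical
  have lip : ∀ φ : X →L[ℝ] ℝ,
      LipschitzOnWith (‖φ‖₊ * L) (fun u => φ (γ u)) (Set.Icc 0 1) :=
    fun φ => φ.lipschitz.comp_lipschitzOnWith hγ
  choose g hg1 hg2 using fun φ : X →L[ℝ] ℝ => exists_lip_ext (lip φ)
  set D : (X →L[ℝ] ℝ) → ℝ → ℝ :=
    fun φ t => derivWithin (fun u => φ (γ u)) (Set.Icc 0 1) t with hD
  have hAae : ∀ᵐ t ∂(volume.restrict A), t ∈ A := ae_restrict_mem hAm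
  have hIooae : ∀ᵐ t ∂(volume.restrict A), t ∈ Set.Ioo (0:ℝ) 1 := by
    rw [ae_iff, Measure.restrict_apply' hAm]
    refine measure_mono_null (fun t ht => ?_) (?_ : volume ({0,1} : Set ℝ) = 0)
    · obtain ⟨ht1, ht2⟩ := ht
      have h0 := (hA ht2).1
      have h1 := (hA ht2).2
      simp only [mem_setOf_eq, Set.mem_Ioo, not_and_or, not_lt] at ht1
      rcases ht1 with h | h
      · left; linarith
      · right; show t = 1; linarith
    · exact (Set.to_countable _).measure_zero _
  have hmaster : ∀ φ : X →L[ℝ] ℝ, ∀ᵐ t ∂(volume.restrict A),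
      t ∈ A ∧ t ∈ Set.Ioo (0:ℝ) 1 ∧
      DifferentiableWithinAt ℝ (fun u => φ (γ u)) (Set.Icc 0 1) t ∧
      D φ t = deriv (g φ) t ∧ |D φ t| ≤ ‖φ‖ * L := by
    intro φ
    filter_upwards [hAae, hIooae, ae_restrict_of_ae (hg2 φ)] with t h1 h2 h3
    obtain ⟨hd, he, hb⟩ := h3 h2
    refine ⟨h1, h2, hd, he, ?_⟩
    have : D φ t = deriv (g φ) t := he
    rw [this]
    calc |deriv (g φ) t| ≤ ((‖φ‖₊ * L : ℝ≥0) : ℝ) := hb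
    _ = ‖φ‖ * L := by push_cast; rfl
  have hmem : ∀ φ, MemLp (D φ) ⊤ (volume.restrict A) := by
    intro φ
    have hmeas : AEStronglyMeasurable (D φ) (volume.restrict A) := by
      have heq : D φ =ᵐ[volume.restrict A] deriv (g φ) :=
        (hmaster φ).mono fun t ht => ht.2.2.2.1
      exact (aestronglyMeasurable_congr heq.symm).1
        (measurable_deriv (g φ)).aestronglyMeasurable
    exact memLp_top_of_bound hmeas (‖φ‖ * L)
      ((hmaster φ).mono fun t ht => by
        simpa [Real.norm_eq_abs] using ht.2.2.2.2)
  have hadd : ∀ φ ψ : X →L[ℝ] ℝ,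
      D (φ + ψ) =ᵐ[volume.restrict A] D φ + D ψ := by
    intro φ ψ
    filter_upwards [hmaster φ, hmaster ψ] with t hφ hψ
    have hu : UniqueDiffWithinAt ℝ (Set.Icc (0:ℝ) 1) t :=
      (uniqueDiffOn_Icc zero_lt_one) t (Set.mem_Icc_of_Ioo hφ.2.1)
    show derivWithin (fun u => (φ + ψ) (γ u)) (Set.Icc 0 1) t = D φ t + D ψ t
    have h1 : (fun u => (φ + ψ) (γ u)) = fun u => φ (γ u) + ψ (γ u) := rfl
    rw [h1, derivWithin_fun_add hφ.2.2.1 hψ.2.2.1]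
  have hsmul : ∀ (c : ℝ) (φ : X →L[ℝ] ℝ),
      D (c • φ) =ᵐ[volume.restrict A] c • D φ := by
    intro c φ
    filter_upwards [hmaster φ] with t hφ
    have hu : UniqueDiffWithinAt ℝ (Set.Icc (0:ℝ) 1) t :=
      (uniqueDiffOn_Icc zero_lt_one) t (Set.mem_Icc_of_Ioo hφ.2.1)
    show derivWithin (fun u => (c • φ) (γ u)) (Set.Icc 0 1) t = c • D φ t
    have h1 : (fun u => (c • φ) (γ u)) = fun u => c • (φ (γ u)) := rfl
    rw [h1, derivWithin_fun_const_smul c hφ.2.2.1]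
  let T0 : (X →L[ℝ] ℝ) →ₗ[ℝ] Lp ℝ ⊤ (volume.restrict A) :=
    { toFun := fun φ => (hmem φ).toLp (D φ)
      map_add' := fun φ ψ =>
        (MemLp.toLp_congr (hmem (φ + ψ)) ((hmem φ).add (hmem ψ)) (hadd φ ψ)).trans
          (MemLp.toLp_add (hmem φ) (hmem ψ))
      map_smul' := fun c φ =>
        (MemLp.toLp_congr (hmem (c • φ)) ((hmem φ).const_smul c) (hsmul c φ)).trans
          (MemLp.toLp_const_smul c (hmem φ)) }
  have hbound : ∀ φ : X →L[ℝ] ℝ, ‖T0 φ‖ ≤ (L : ℝ) * ‖φ‖ := by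
    intro φ
    show ‖(hmem φ).toLp (D φ)‖ ≤ (L : ℝ) * ‖φ‖
    rw [MeasureTheory.Lp.norm_toLp (D φ) (hmem φ)]
    have h1 : eLpNorm (D φ) ⊤ (volume.restrict A) ≤ ENNReal.ofReal (‖φ‖ * L) := by
      have h2 := eLpNorm_le_of_ae_bound (μ := volume.restrict A) (p := ⊤)
        (f := D φ) (C := ‖φ‖ * L)
        ((hmaster φ).mono fun t ht => by
          simpa [Real.norm_eq_abs] using ht.2.2.2.2)
      simpa using h2
    calc (eLpNorm (D φ) ⊤ (volume.restrict A)).toReal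
        ≤ (ENNReal.ofReal (‖φ‖ * L)).toReal :=
          ENNReal.toReal_mono ENNReal.ofReal_ne_top h1
    _ = ‖φ‖ * L := ENNReal.toReal_ofReal (by positivity)
    _ = (L : ℝ) * ‖φ‖ := mul_comm _ _

  have himg : ∀ φ : X →L[ℝ] ℝ, φ '' (γ '' A) = (fun u => φ (γ u)) '' A :=
    fun φ => Set.image_image φ γ A
  have hiff : ∀ φ : X →L[ℝ] ℝ,
      volume (φ '' (γ '' A)) = 0 ↔ D φ =ᵐ[volume.restrict A] 0 := by
    intro φ
    set f : ℝ → ℝ := fun u => φ (γ u) with hf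
    constructor
    · -- null image implies derivative vanishes a.e.
      intro hnull
      rw [himg φ] at hnull
      set E : Set ℝ := {t | (t ∈ A ∧ t ∈ Set.Ioo (0:ℝ) 1) ∧
        DifferentiableWithinAt ℝ f (Set.Icc 0 1) t ∧
        derivWithin f (Set.Icc 0 1) t ≠ 0} with hE
      have hEnull : volume E = 0 := by
        refine null_of_local_expansion hA hnull E (fun t ht => ht.1.1) ?_
        intro t ht
        set c₀ : ℝ := derivWithin f (Set.Icc 0 1) t with hc₀def
        have hc₀ : c₀ ≠ 0 := ht.2.2
        have hcpos : 0 < |c₀| := abs_pos.2 hc₀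
        have hder : HasDerivWithinAt f c₀ (Set.Icc 0 1) t := ht.2.1.hasDerivWithinAt
        have hslope := hasDerivWithinAt_iff_tendsto_slope.1 hder
        have hev : ∀ᶠ u in 𝓝[Set.Icc (0:ℝ) 1 \ {t}] t,
            |slope f t u - c₀| < |c₀| / 2 := by
          have hb := hslope (Metric.ball_mem_nhds c₀ (by positivity : (0:ℝ) < |c₀|/2))
          filter_upwards [hb] with u hu
          simpa [Real.dist_eq] using hu
        obtain ⟨ε, hε, hsub⟩ := Metric.mem_nhdsWithin_iff.1 hev
        refine ⟨2 / |c₀|, by positivity, ε / 2, by positivity, ?_⟩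
        intro u hu hdist
        by_cases hut : u = t
        · simp [hut]
        · have hu2 : u ∈ Metric.ball t ε ∩ (Set.Icc (0:ℝ) 1 \ {t}) := by
            refine ⟨?_, hA hu, by simpa using hut⟩
            rw [Metric.mem_ball, Real.dist_eq]
            linarith
          have hp : |slope f t u - c₀| < |c₀| / 2 := hsub hu2
          have h5 : |c₀| / 2 ≤ |slope f t u| := by
            have h51 : |c₀| ≤ |slope f t u| + |slope f t u - c₀| := by
              calc |c₀| = |slope f t u - (slope f t u - c₀)| := by ring_nf
              _ ≤ |slope f t u| + |slope f t u - c₀| := abs_sub _ _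
            linarith
          have hut' : |u - t| > 0 := abs_pos.2 (sub_ne_zero.2 hut)
          have h6 : |slope f t u| = |f u - f t| / |u - t| := by
            rw [slope_def_field, abs_div]
          have h7 : |c₀| / 2 * |u - t| ≤ |f u - f t| := by
            rw [h6] at h5
            exact (le_div_iff₀ hut').1 h5
          rw [abs_sub_comm t u, abs_sub_comm (f t) (f u)]
          calc |u - t| = 2 / |c₀| * (|c₀| / 2 * |u - t|) := by field_simp
          _ ≤ 2 / |c₀| * |f u - f t| := by gcongr
      have hE' : (volume.restrict A) E = 0 := by
        rw [Measure.restrict_apply' hAm]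
        exact measure_mono_null Set.inter_subset_left hEnull
      have hEae : ∀ᵐ t ∂(volume.restrict A), t ∉ E := measure_eq_zero_iff_ae_notMem.1 hE'
      filter_upwards [hmaster φ, hEae] with t hm hnE
      show D φ t = 0
      by_contra hne
      exact hnE ⟨⟨hm.1, hm.2.1⟩, hm.2.2.1, hne⟩
    · -- derivative vanishes a.e. implies null image
      intro hz
      rw [himg φ]
      have hae2 : (volume.restrict A) {t | ¬ (DifferentiableWithinAt ℝ f (Set.Icc 0 1) t ∧
          derivWithin f (Set.Icc 0 1) t = 0)} = 0 := by
        rw [← ae_iff]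
        filter_upwards [hmaster φ, hz] with t hm h0
        exact ⟨hm.2.2.1, h0⟩
      rw [Measure.restrict_apply' hAm] at hae2
      set s : Set ℝ := {t ∈ A | DifferentiableWithinAt ℝ f (Set.Icc 0 1) t ∧
        derivWithin f (Set.Icc 0 1) t = 0} with hs
      have hAs : volume (A \ s) = 0 := by
        refine measure_mono_null (fun t ht => ?_) hae2
        refine ⟨?_, ht.1⟩
        intro hgood
        exact ht.2 ⟨ht.1, hgood⟩
      have h1 : volume (f '' (A \ s)) = 0 := by
        have := lipOn_vol_image_le ((lip φ).mono
          ((Set.diff_subset).trans hA) : LipschitzOnWith (‖φ‖₊ * L) f (A \ s))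
        rw [hAs, mul_zero] at this
        exact le_antisymm this zero_le
      have h2 : volume (f '' s) = 0 := by
        refine MeasureTheory.addHaar_image_eq_zero_of_det_fderivWithin_eq_zero volume
          (f' := fun _ => (0 : ℝ →L[ℝ] ℝ)) (fun x hx => ?_) (fun x hx => ?_)
        · have hd : HasDerivWithinAt f 0 (Set.Icc 0 1) x := by
            have := hx.2.1.hasDerivWithinAt
            rwa [hx.2.2] at this
          have hd2 : HasDerivWithinAt f 0 s x :=
            hd.mono (fun y hy => hA hy.1)
          have h3 := hasDerivWithinAt_iff_hasFDerivWithinAt.1 hd2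
          have hz0 : (ContinuousLinearMap.toSpanSingleton ℝ (0:ℝ)) = 0 := by
            ext; simp
          rwa [hz0] at h3
        · simp [ContinuousLinearMap.det]
      have hsub2 : f '' A ⊆ f '' s ∪ f '' (A \ s) := by
        rw [← Set.image_union]
        exact Set.image_mono (f := f) (fun t ht => by
          by_cases hts : t ∈ s
          · exact Or.inl hts
          · exact Or.inr ⟨ht, hts⟩)
      refine le_antisymm ?_ zero_le
      calc volume (f '' A) ≤ volume (f '' s ∪ f '' (A \ s)) := measure_mono hsub2
      _ ≤ volume (f '' s) + volume (f '' (A \ s)) := measure_union_le _ _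
      _ = 0 := by rw [h1, h2, add_zero]
  have hTzero : ∀ φ : X →L[ℝ] ℝ,
      ((hmem φ).toLp (D φ) = 0 ↔ D φ =ᵐ[volume.restrict A] 0) := by
    intro φ
    rw [Lp.eq_zero_iff_ae_eq_zero]
    constructor
    · intro h
      exact ((MemLp.coeFn_toLp (hmem φ)).symm.trans h)
    · intro h
      exact ((MemLp.coeFn_toLp (hmem φ)).trans h)
  refine ⟨T0.mkContinuous L hbound, ?_, ?_, ?_, ?_, ?_⟩
  · exact T0.mkContinuous_norm_le L.coe_nonneg hbound
  · intro φ
    exact MemLp.coeFn_toLp (hmem φ)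
  · exact IsClosed.preimage (T0.mkContinuous L hbound).continuous isClosed_singleton
  · intro φ
    exact (hiff φ).trans (hTzero φ).symm
  · intro huniv
    rw [Set.eq_univ_iff_forall] at huniv
    have hallnull : ∀ φ : X →L[ℝ] ℝ, volume (φ '' (γ '' A)) = 0 := by
      intro φ
      exact (hiff φ).2 ((hTzero φ).1 (huniv φ))
    -- find a Lebesgue density point of `A`
    have hbes := Besicovitch.ae_tendsto_measure_inter_div_of_measurableSet volume hAm
    have hfreq : ∃ᶠ x in ae (volume : Measure ℝ), x ∈ A := by
      by_contra hcon
      rw [Filter.not_frequently] at hcon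
      exact absurd (measure_eq_zero_iff_ae_notMem.2 hcon) (ne_of_gt hApos)
    obtain ⟨x, hxA, hxG⟩ := (hfreq.and_eventually hbes).exists
    rw [Set.indicator_of_mem hxA, Pi.one_apply] at hxG
    set ε : ℝ := 1 / ((L:ℝ)^2 + 4) with hε
    have hLpos : (0:ℝ) < L := hL
    have hεpos : 0 < ε := by positivity
    have hεeq : ε * ((L:ℝ)^2 + 4) = 1 := by
      rw [hε]; field_simp
    have hεle : ε ≤ 1/4 := by
      rw [hε, div_le_div_iff₀ (by positivity) (by norm_num)]
      nlinarith [sq_nonneg (L:ℝ)]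
    have hc1 : ENNReal.ofReal (1 - ε) < 1 := by
      rw [← ENNReal.ofReal_one]
      exact (ENNReal.ofReal_lt_ofReal_iff zero_lt_one).2 (by linarith)
    have hev := hxG.eventually (eventually_gt_nhds hc1)
    obtain ⟨r, hrratio, hrmem⟩ := (hev.and self_mem_nhdsWithin).exists
    have hrpos : (0:ℝ) < r := hrmem
    set B := Metric.closedBall x r with hB
    have hBvol : volume B = ENNReal.ofReal (2*r) := Real.volume_closedBall x r
    have hBne : volume B ≠ 0 := by
      rw [hBvol, Ne, ENNReal.ofReal_eq_zero, not_le]; linarith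
    have hBfin : volume B ≠ ⊤ := by rw [hBvol]; exact ENNReal.ofReal_ne_top
    have hABfin : volume (A ∩ B) ≠ ⊤ :=
      ne_top_of_le_ne_top hBfin (measure_mono Set.inter_subset_right)
    have hAB : ENNReal.ofReal ((1-ε)*(2*r)) < volume (A ∩ B) := by
      have h1 := (ENNReal.lt_div_iff_mul_lt (Or.inl hBne) (Or.inl hBfin)).1 hrratio
      calc ENNReal.ofReal ((1-ε)*(2*r))
          = ENNReal.ofReal (1-ε) * ENNReal.ofReal (2*r) :=
            ENNReal.ofReal_mul (by linarith)
      _ = ENNReal.ofReal (1-ε) * volume B := by rw [hBvol]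
      _ < volume (A ∩ B) := h1
    have hBIcc : B = Set.Icc (x - r) (x + r) := Real.closedBall_eq_Icc
    -- points of A near the two ends of B
    have hend : ∀ a b : ℝ, x - r ≤ a → b ≤ x + r → 2*ε*r < b - a →
        ∃ s ∈ A, s ∈ Set.Icc a b := by
      intro a b ha hb hab
      by_contra hcon
      push_neg at hcon
      have hsub : A ∩ B ⊆ Set.Icc (x - r) (x + r) \ Set.Icc a b := by
        rintro t ⟨htA, htB⟩
        rw [hBIcc] at htB
        exact ⟨htB, fun hmem => (hcon t htA) hmem⟩
      have hle : volume (A ∩ B) ≤ ENNReal.ofReal (2*r - (b - a)) := by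
        calc volume (A ∩ B) ≤ volume (Set.Icc (x-r) (x+r) \ Set.Icc a b) :=
              measure_mono hsub
        _ = volume (Set.Icc (x-r) (x+r)) - volume (Set.Icc a b) :=
              measure_diff (Set.Icc_subset_Icc ha hb)
                measurableSet_Icc.nullMeasurableSet
                (by rw [Real.volume_Icc]; exact ENNReal.ofReal_ne_top)
        _ = ENNReal.ofReal ((x+r) - (x-r)) - ENNReal.ofReal (b - a) := by
              rw [Real.volume_Icc, Real.volume_Icc]
        _ ≤ ENNReal.ofReal (2*r - (b - a)) := by
              rw [← ENNReal.ofReal_sub _ (by nlinarith [mul_pos hεpos hrpos])]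
              exact ENNReal.ofReal_le_ofReal (by linarith)
      have h2 := hAB.trans_le hle
      rw [ENNReal.ofReal_lt_ofReal_iff_of_nonneg (by nlinarith [hεle, hrpos])] at h2
      nlinarith
    obtain ⟨s₂, hs₂A, hs₂I⟩ := hend (x + r - 3*ε*r) (x + r)
      (by nlinarith) le_rfl (by nlinarith)
    obtain ⟨s₁, hs₁A, hs₁I⟩ := hend (x - r) (x - r + 3*ε*r)
      le_rfl (by nlinarith) (by nlinarith)
    have hs12 : 2*r*(1 - 3*ε) ≤ s₂ - s₁ := by
      have := hs₂I.1; have := hs₁I.2; nlinarith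
    have hslt : s₁ < s₂ := by nlinarith
    -- gap measure
    have hgap : volume (Set.Icc s₁ s₂ \ A) ≤ ENNReal.ofReal (ε*(2*r)) := by
      have hsubB : Set.Icc s₁ s₂ \ A ⊆ B \ (A ∩ B) := by
        intro t ht
        have htB : t ∈ B := by
          rw [hBIcc]
          constructor
          · linarith [ht.1.1, hs₁I.1]
          · linarith [ht.1.2, hs₂I.2]
        exact ⟨htB, fun hmem => ht.2 hmem.1⟩
      calc volume (Set.Icc s₁ s₂ \ A) ≤ volume (B \ (A ∩ B)) := measure_mono hsubB
      _ = volume B - volume (A ∩ B) :=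
            measure_diff Set.inter_subset_right
              ((hAm.inter (hBIcc ▸ measurableSet_Icc)).nullMeasurableSet) hABfin
      _ ≤ ENNReal.ofReal (2*r) - ENNReal.ofReal ((1-ε)*(2*r)) := by
            rw [hBvol]
            exact tsub_le_tsub le_rfl hAB.le
      _ = ENNReal.ofReal (2*r - (1-ε)*(2*r)) := by
            rw [ENNReal.ofReal_sub _ (by nlinarith)]
      _ = ENNReal.ofReal (ε*(2*r)) := by ring_nf
    -- the norming functional
    have hγne : γ s₂ - γ s₁ ≠ 0 := by
      intro h0
      have h1 := hbi s₂ hs₂A s₁ hs₁A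
      rw [h0, norm_zero, mul_zero] at h1
      have h2 : s₂ - s₁ ≤ 0 := le_trans (le_abs_self _) h1
      linarith
    obtain ⟨φ, hφn, hφv⟩ := exists_dual_vector ℝ (γ s₂ - γ s₁) (norm_ne_zero_iff.2 hγne)
    set fφ : ℝ → ℝ := fun u => φ (γ u) with hfφ
    have hfd : fφ s₂ - fφ s₁ = ‖γ s₂ - γ s₁‖ := by
      rw [show fφ s₂ - fφ s₁ = φ (γ s₂ - γ s₁) from (map_sub φ _ _).symm]
      exact_mod_cast hφv
    have hlower : (s₂ - s₁)/(L:ℝ) ≤ fφ s₂ - fφ s₁ := by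
      rw [hfd, div_le_iff₀ hLpos]
      have h1 := hbi s₂ hs₂A s₁ hs₁A
      have h2 := le_abs_self (s₂ - s₁)
      linarith [mul_comm (L:ℝ) ‖γ s₂ - γ s₁‖ ▸ h1]
    have hIccsub : Set.Icc s₁ s₂ ⊆ Set.Icc (0:ℝ) 1 :=
      Set.Icc_subset_Icc (hA hs₁A).1 (hA hs₂A).2
    have hcont : ContinuousOn fφ (Set.Icc s₁ s₂) := ((lip φ).mono hIccsub).continuousOn
    have hivt := intermediate_value_Icc hslt.le hcont
    have himg1 : volume (fφ '' (Set.Icc s₁ s₂ ∩ A)) = 0 := by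
      refine measure_mono_null ?_ (hallnull φ)
      rw [himg φ]
      exact Set.image_mono Set.inter_subset_right
    have himg2 : volume (fφ '' (Set.Icc s₁ s₂ \ A)) ≤
        (L : ℝ≥0∞) * volume (Set.Icc s₁ s₂ \ A) := by
      have h1 := lipOn_vol_image_le (s := Set.Icc s₁ s₂ \ A) ((lip φ).mono (Set.diff_subset.trans hIccsub))
      have hn1 : ‖φ‖₊ = 1 := by
        ext
        rw [coe_nnnorm, hφn, NNReal.coe_one]
      rwa [hn1, one_mul] at h1
    have hchain : ENNReal.ofReal ((s₂ - s₁)/(L:ℝ)) ≤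
        (L:ℝ≥0∞) * volume (Set.Icc s₁ s₂ \ A) := by
      calc ENNReal.ofReal ((s₂ - s₁)/(L:ℝ))
          ≤ ENNReal.ofReal (fφ s₂ - fφ s₁) := ENNReal.ofReal_le_ofReal hlower
      _ = volume (Set.Icc (fφ s₁) (fφ s₂)) := (Real.volume_Icc).symm
      _ ≤ volume (fφ '' Set.Icc s₁ s₂) := measure_mono hivt
      _ ≤ volume (fφ '' (Set.Icc s₁ s₂ ∩ A) ∪ fφ '' (Set.Icc s₁ s₂ \ A)) :=
            measure_mono (by rw [← Set.image_union, Set.inter_union_diff])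
      _ ≤ volume (fφ '' (Set.Icc s₁ s₂ ∩ A)) + volume (fφ '' (Set.Icc s₁ s₂ \ A)) :=
            measure_union_le _ _
      _ = volume (fφ '' (Set.Icc s₁ s₂ \ A)) := by rw [himg1, zero_add]
      _ ≤ (L:ℝ≥0∞) * volume (Set.Icc s₁ s₂ \ A) := himg2
    have hfinal : ENNReal.ofReal ((s₂ - s₁)/(L:ℝ)) ≤
        ENNReal.ofReal ((L:ℝ) * (ε*(2*r))) := by
      calc ENNReal.ofReal ((s₂ - s₁)/(L:ℝ))
          ≤ (L:ℝ≥0∞) * volume (Set.Icc s₁ s₂ \ A) := hchain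
      _ ≤ (L:ℝ≥0∞) * ENNReal.ofReal (ε*(2*r)) := by gcongr
      _ = ENNReal.ofReal ((L:ℝ) * (ε*(2*r))) := by
            rw [← ENNReal.ofReal_coe_nnreal, ← ENNReal.ofReal_mul L.coe_nonneg]
    rw [ENNReal.ofReal_le_ofReal_iff (by positivity)] at hfinal
    rw [div_le_iff₀ hLpos] at hfinal
    nlinarith [mul_pos hεpos hrpos, sq_nonneg (L:ℝ)]
end
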